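/- arXiv:1703.00299 — 10 statements merged into one kernel-verified Lean document; each statement's English description precedes it below -/
import Mathlib

section
/- For every integer k ≥ 2 and pairwise distinct positive real numbers e₀, e₁, …, e_{k−1}, one has ∫₀^∞ (1+θe₀)^{−2} ∏_{j=1}^{k−1} (1 − 1/(1+θe_j)) dθ = (1/e₀)·∏_{i=1}^{k−1} e_i/(e_i−e₀) + ∑_{j=1}^{k−1} [e_j/(e_j−e₀)²]·(∏_{1≤i≤k−1, i≠j} e_i/(e_i−e_j))·log(e₀/e_j). -/
open MeasureTheory Real Finset Filter Topology

private lemma pf_hidden : True := trivial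

lemma pf1 (a b θ : ℝ) (ha : 1+θ*a ≠ 0) (hb : 1+θ*b ≠ 0) (hab : b ≠ a) :
    (1+θ*a)⁻¹ * (1 - 1/(1+θ*b))
      = (b/(b-a)) * (1+θ*a)⁻¹ - (b/(b-a)) * (1+θ*b)⁻¹ := by
  have h : b - a ≠ 0 := sub_ne_zero.2 hab
  field_simp
  ring

lemma pf2 (a b θ : ℝ) (ha : 1+θ*a ≠ 0) (hb : 1+θ*b ≠ 0) (hab : b ≠ a) :
    ((1+θ*a)^2)⁻¹ * (1 - 1/(1+θ*b))
      = (b/(b-a)) * ((1+θ*a)^2)⁻¹ + (a*b/(b-a)^2) * (1+θ*a)⁻¹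
        - (b^2/(b-a)^2) * (1+θ*b)⁻¹ := by
  have h : b - a ≠ 0 := sub_ne_zero.2 hab
  field_simp
  ring

noncomputable def Cf (e : ℕ → ℝ) (n j : ℕ) : ℝ :=
  -((e j)^2 / (e j - e 0)^2) * ∏ i ∈ (Finset.Ico 1 n).erase j, e i / (e i - e j)



noncomputable def Gf (e : ℕ → ℝ) (k : ℕ) (θ : ℝ) : ℝ :=
  (∏ i ∈ Finset.Ico 1 k, e i / (e i - e 0)) * (1/e 0) * (1 - (1 + θ * e 0)⁻¹)
    + ∑ j ∈ Finset.Ico 1 k, (Cf e k j / e j) * (Real.log (1 + θ * e j) - Real.log (1 + θ * e 0))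

lemma Gf_zero (e : ℕ → ℝ) (k : ℕ) : Gf e k 0 = 0 := by
  simp [Gf]

-- derivative building block
lemma hd_inv (a θ : ℝ) (h : 1 + θ * a ≠ 0) :
    HasDerivAt (fun t : ℝ => (1 + t * a)⁻¹) (-(a * ((1 + θ * a)^2)⁻¹)) θ := by
  have h1 : HasDerivAt (fun t : ℝ => 1 + t * a) a θ := by
    simpa using ((hasDerivAt_id θ).mul_const a).const_add 1
  have := h1.fun_inv h
  exact this.congr_deriv (by ring)

lemma hd_log (a θ : ℝ) (h : 1 + θ * a ≠ 0) :
    HasDerivAt (fun t : ℝ => Real.log (1 + t * a)) (a * (1 + θ * a)⁻¹) θ := by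
  have h1 : HasDerivAt (fun t : ℝ => 1 + t * a) a θ := by
    simpa using ((hasDerivAt_id θ).mul_const a).const_add 1
  have := h1.log h
  convert this using 1
  ring

lemma key (e : ℕ → ℝ) : ∀ n : ℕ, (∀ i < n, e i ≠ 0) →
    (∀ i < n, ∀ j < n, i ≠ j → e i ≠ e j) →
    ∀ θ : ℝ, (∀ i < n, 1 + θ * e i ≠ 0) →
    ((1 + θ * e 0)^2)⁻¹ * ∏ j ∈ Finset.Ico 1 n, (1 - 1/(1 + θ * e j))
      = (∏ j ∈ Finset.Ico 1 n, e j / (e j - e 0)) * ((1 + θ * e 0)^2)⁻¹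
        + (- e 0 * ∑ j ∈ Finset.Ico 1 n, Cf e n j / e j) * (1 + θ * e 0)⁻¹
        + ∑ j ∈ Finset.Ico 1 n, Cf e n j * (1 + θ * e j)⁻¹ := by
  intro n
  induction n with
  | zero => intro _ _ θ _; simp
  | succ n ih =>
    intro hne hdist θ hθ
    rcases Nat.eq_zero_or_pos n with rfl | hn
    · simp
    have hne' : ∀ i < n, e i ≠ 0 := fun i hi => hne i (hi.trans (Nat.lt_succ_self n))
    have hdist' : ∀ i < n, ∀ j < n, i ≠ j → e i ≠ e j := fun i hi j hj hij =>
      hdist i (hi.trans (Nat.lt_succ_self n)) j (hj.trans (Nat.lt_succ_self n)) hij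
    have hθ' : ∀ i < n, 1 + θ * e i ≠ 0 := fun i hi => hθ i (hi.trans (Nat.lt_succ_self n))
    have hins : Finset.Ico 1 (n+1) = insert n (Finset.Ico 1 n) :=
      Nat.Ico_succ_right_eq_insert_Ico hn
    have hnotmem : n ∉ Finset.Ico 1 n := by simp
    have hb0 : e n ≠ e 0 := hdist n (Nat.lt_succ_self n) 0 (by omega) (by omega)
    have hbne : e n ≠ 0 := hne n (Nat.lt_succ_self n)
    have h0ne : e 0 ≠ 0 := hne 0 (by omega)
    have hmem : ∀ j ∈ Finset.Ico 1 n, 1 ≤ j ∧ j < n := by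
      intro j hj; exact ⟨(Finset.mem_Ico.1 hj).1, (Finset.mem_Ico.1 hj).2⟩
    have hejn : ∀ j ∈ Finset.Ico 1 n, e n ≠ e j := by
      intro j hj
      exact hdist n (Nat.lt_succ_self n) j ((hmem j hj).2.trans (Nat.lt_succ_self n))
        (by have := (hmem j hj).2; omega)
    have hejne : ∀ j ∈ Finset.Ico 1 n, e j ≠ 0 := fun j hj => hne' j (hmem j hj).2
    -- evaluation point θ* = -(e n)⁻¹
    have hθs : ∀ i < n, 1 + (-(e n)⁻¹) * e i ≠ 0 := by
      intro i hi
      have h1 : 1 + (-(e n)⁻¹) * e i = (e n - e i)/(e n) := by field_simp; ring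
      rw [h1]
      exact div_ne_zero (sub_ne_zero.2 (hdist n (Nat.lt_succ_self n) i
        (hi.trans (Nat.lt_succ_self n)) (by omega))) hbne
    have h1 := ih hne' hdist' (-(e n)⁻¹) hθs
    have e0r : 1 + (-(e n)⁻¹) * e 0 = (e n - e 0)/(e n) := by field_simp; ring
    have h2 : ∀ j ∈ Finset.Ico 1 n, 1 + (-(e n)⁻¹) * e j = (e n - e j)/(e n) := by
      intro j hj; field_simp; ring
    have hprodr : ∏ j ∈ Finset.Ico 1 n, (1 - 1/(1 + (-(e n)⁻¹) * e j))
        = ∏ j ∈ Finset.Ico 1 n, (e j / (e j - e n)) := by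
      refine Finset.prod_congr rfl fun j hj => ?_
      rw [h2 j hj]
      have h3 : e n - e j ≠ 0 := sub_ne_zero.2 (hejn j hj)
      have h4 : e j - e n ≠ 0 := fun h => h3 (by linarith [sub_eq_zero.1 h])
      field_simp
      ring
    have hsumr : ∑ j ∈ Finset.Ico 1 n, Cf e n j * (1 + (-(e n)⁻¹) * e j)⁻¹
        = ∑ j ∈ Finset.Ico 1 n, Cf e n j * (e n/(e n - e j)) :=
      Finset.sum_congr rfl fun j hj => by rw [h2 j hj, inv_div]
    rw [e0r, hprodr, hsumr, div_pow, inv_div, inv_div] at h1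
    have hCn : Cf e (n+1) n = -((∏ j ∈ Finset.Ico 1 n, e j/(e j - e 0)) * (e n^2/(e n - e 0)^2)
        + (- e 0 * ∑ j ∈ Finset.Ico 1 n, Cf e n j / e j) * (e n/(e n - e 0))
        + ∑ j ∈ Finset.Ico 1 n, Cf e n j * (e n/(e n - e j))) := by
      have hCfn : Cf e (n+1) n = -(e n^2/(e n - e 0)^2) * ∏ x ∈ Finset.Ico 1 n, e x/(e x - e n) := by
        simp only [Cf, hins, Finset.erase_insert hnotmem]
      rw [hCfn, ← h1]
      ring
    have hCj : ∀ j ∈ Finset.Ico 1 n, Cf e (n+1) j = Cf e n j * (e n / (e n - e j)) := by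
      intro j hj
      have hjn : j ≠ n := Nat.ne_of_lt (hmem j hj).2
      have hmm : n ∉ (Finset.Ico 1 n).erase j := fun h => hnotmem (Finset.mem_of_mem_erase h)
      simp only [Cf, hins, Finset.erase_insert_of_ne hjn.symm, Finset.prod_insert hmm]
      ring
    have hsum4 : ∑ j ∈ Finset.Ico 1 n, Cf e n j * (e n/(e n - e j))/e n
        = (∑ j ∈ Finset.Ico 1 n, Cf e n j * (e n/(e n - e j))) / e n := by
      rw [Finset.sum_div]
    have hsum3 : ∑ j ∈ Finset.Ico 1 n, Cf e n j * (e n/(e n - e j))/e j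
        = (∑ j ∈ Finset.Ico 1 n, Cf e n j * (e n/(e n - e j))) / e n
          + ∑ j ∈ Finset.Ico 1 n, Cf e n j / e j := by
      rw [← hsum4, ← Finset.sum_add_distrib]
      refine Finset.sum_congr rfl fun j hj => ?_
      have hc := hejne j hj
      have hbc : e n - e j ≠ 0 := sub_ne_zero.2 (hejn j hj)
      field_simp
      ring
    have hB : - e 0 * (Cf e (n+1) n / e n + ∑ j ∈ Finset.Ico 1 n, Cf e (n+1) j / e j)
        = (- e 0 * ∑ j ∈ Finset.Ico 1 n, Cf e n j / e j) * (e n/(e n - e 0))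
          + (∏ j ∈ Finset.Ico 1 n, e j/(e j - e 0)) * (e 0 * e n/(e n - e 0)^2) := by
      have hrw : ∑ j ∈ Finset.Ico 1 n, Cf e (n+1) j / e j
          = ∑ j ∈ Finset.Ico 1 n, Cf e n j * (e n/(e n - e j))/e j :=
        Finset.sum_congr rfl fun j hj => by rw [hCj j hj]
      rw [hrw, hsum3, hCn]
      have hba : e n - e 0 ≠ 0 := sub_ne_zero.2 hb0
      field_simp
      ring
    -- assembly
    have hw : 1 + θ * e n ≠ 0 := hθ n (Nat.lt_succ_self n)
    have h0 : 1 + θ * e 0 ≠ 0 := hθ 0 (by omega)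
    rw [hins, Finset.prod_insert hnotmem, Finset.prod_insert hnotmem,
      Finset.sum_insert hnotmem, Finset.sum_insert hnotmem]
    have lhs1 : ((1 + θ * e 0)^2)⁻¹ *
        ((1 - 1/(1 + θ * e n)) * ∏ j ∈ Finset.Ico 1 n, (1 - 1/(1 + θ * e j)))
        = (((1 + θ * e 0)^2)⁻¹ * ∏ j ∈ Finset.Ico 1 n, (1 - 1/(1 + θ * e j)))
          * (1 - 1/(1 + θ * e n)) := by ring
    rw [lhs1, ih hne' hdist' θ hθ', add_mul, add_mul, Finset.sum_mul]
    have e2 := pf2 (e 0) (e n) θ h0 hw hb0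
    have e1 := pf1 (e 0) (e n) θ h0 hw hb0
    have esum : ∑ j ∈ Finset.Ico 1 n, Cf e n j * (1 + θ * e j)⁻¹ * (1 - 1/(1 + θ * e n))
        = ∑ j ∈ Finset.Ico 1 n, ((Cf e n j * (e n/(e n - e j))) * (1 + θ * e j)⁻¹
            - (Cf e n j * (e n/(e n - e j))) * (1 + θ * e n)⁻¹) := by
      refine Finset.sum_congr rfl fun j hj => ?_
      rw [mul_assoc, pf1 (e j) (e n) θ (hθ' j (hmem j hj).2) hw (hejn j hj)]
      ring
    rw [esum, Finset.sum_sub_distrib, ← Finset.sum_mul]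
    have hrw2 : ∑ j ∈ Finset.Ico 1 n, Cf e (n+1) j * (1 + θ * e j)⁻¹
        = ∑ j ∈ Finset.Ico 1 n, (Cf e n j * (e n/(e n - e j))) * (1 + θ * e j)⁻¹ :=
      Finset.sum_congr rfl fun j hj => by rw [hCj j hj]
    rw [hrw2, hB, hCn]
    have hsc : ∑ j ∈ Finset.Ico 1 n, Cf e n j * (e n/(e n - e j)) * (1 + θ * e n)⁻¹
        = (∑ j ∈ Finset.Ico 1 n, Cf e n j * (e n/(e n - e j))) * (1 + θ * e n)⁻¹ := by
      rw [Finset.sum_mul]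
    linear_combination (∏ j ∈ Finset.Ico 1 n, e j / (e j - e 0)) * e2
      + (- e 0 * ∑ j ∈ Finset.Ico 1 n, Cf e n j / e j) * e1

/-- Lemma A.1 (partial fractions integral, first part): for pairwise distinct positive
reals `e 0, …, e (k-1)` (`k ≥ 2`),
`∫₀^∞ (1+θe₀)⁻² ∏_{j=1}^{k-1} (1 − 1/(1+θeⱼ)) dθ
  = (1/e₀) ∏_{i=1}^{k-1} eᵢ/(eᵢ−e₀)
    + ∑_{j=1}^{k-1} (eⱼ/(eⱼ−e₀)²) (∏_{i≠j} eᵢ/(eᵢ−eⱼ)) log(e₀/eⱼ)`. -/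
theorem integral_partial_fractions_Ioi
    (k : ℕ) (hk : 2 ≤ k) (e : ℕ → ℝ)
    (hpos : ∀ i < k, 0 < e i)
    (hdist : ∀ i < k, ∀ j < k, i ≠ j → e i ≠ e j) :
    ∫ θ in Set.Ioi (0 : ℝ),
        ((1 + θ * e 0) ^ 2)⁻¹ * ∏ j ∈ Finset.Ico 1 k, (1 - 1 / (1 + θ * e j))
      = (1 / e 0) * ∏ i ∈ Finset.Ico 1 k, e i / (e i - e 0)
        + ∑ j ∈ Finset.Ico 1 k,
            (e j / (e j - e 0) ^ 2) *
              (∏ i ∈ (Finset.Ico 1 k).erase j, e i / (e i - e j)) *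
                Real.log (e 0 / e j) := by
  have key := fun θ hθ => key e k (fun i hi => (hpos i hi).ne') hdist θ hθ
  have h0pos : 0 < e 0 := hpos 0 (by omega)
  have hjpos : ∀ j ∈ Finset.Ico 1 k, 0 < e j := fun j hj => hpos j (Finset.mem_Ico.1 hj).2
  have hposθ : ∀ θ : ℝ, 0 ≤ θ → ∀ i < k, 0 < 1 + θ * e i := by
    intro θ hθ i hi
    have := hpos i hi
    nlinarith
  -- derivative
  have hderiv : ∀ θ ∈ Set.Ici (0:ℝ), HasDerivAt (Gf e k)
      (((1 + θ * e 0)^2)⁻¹ * ∏ j ∈ Finset.Ico 1 k, (1 - 1/(1 + θ * e j))) θ := by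
    intro θ hθ
    have hne : ∀ i < k, 1 + θ * e i ≠ 0 := fun i hi => (hposθ θ hθ i hi).ne'
    have h0 : 1 + θ * e 0 ≠ 0 := hne 0 (by omega)
    have d1 : HasDerivAt (fun t : ℝ => (∏ i ∈ Finset.Ico 1 k, e i / (e i - e 0)) * (1/e 0) * (1 - (1 + t * e 0)⁻¹))
        ((∏ i ∈ Finset.Ico 1 k, e i / (e i - e 0)) * (1/e 0) * (e 0 * ((1 + θ * e 0)^2)⁻¹)) θ := by
      have := ((hd_inv (e 0) θ h0).const_sub 1).const_mul ((∏ i ∈ Finset.Ico 1 k, e i / (e i - e 0)) * (1/e 0))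
      exact this.congr_deriv (by ring)
    have d2 : ∀ j ∈ Finset.Ico 1 k, HasDerivAt
        (fun t : ℝ => (Cf e k j / e j) * (Real.log (1 + t * e j) - Real.log (1 + t * e 0)))
        ((Cf e k j / e j) * (e j * (1 + θ * e j)⁻¹ - e 0 * (1 + θ * e 0)⁻¹)) θ := by
      intro j hj
      have hnej : 1 + θ * e j ≠ 0 := hne j (Finset.mem_Ico.1 hj).2
      exact ((hd_log (e j) θ hnej).sub (hd_log (e 0) θ h0)).const_mul _
    have dG : HasDerivAt (Gf e k) ((∏ i ∈ Finset.Ico 1 k, e i / (e i - e 0)) * (1/e 0) * (e 0 * ((1 + θ * e 0)^2)⁻¹)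
        + ∑ j ∈ Finset.Ico 1 k, (Cf e k j / e j) * (e j * (1 + θ * e j)⁻¹ - e 0 * (1 + θ * e 0)⁻¹)) θ :=
      d1.add (HasDerivAt.fun_sum d2)
    convert dG using 1
    rw [key θ hne]
    have hs : ∑ j ∈ Finset.Ico 1 k, (Cf e k j / e j) * (e j * (1 + θ * e j)⁻¹ - e 0 * (1 + θ * e 0)⁻¹)
        = ∑ j ∈ Finset.Ico 1 k, Cf e k j * (1 + θ * e j)⁻¹
          - (∑ j ∈ Finset.Ico 1 k, Cf e k j / e j) * (e 0 * (1 + θ * e 0)⁻¹) := by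
      rw [Finset.sum_mul, ← Finset.sum_sub_distrib]
      refine Finset.sum_congr rfl fun j hj => ?_
      have : e j ≠ 0 := (hjpos j hj).ne'
      field_simp
    rw [hs]
    have h00 : e 0 ≠ 0 := h0pos.ne'
    generalize (∏ i ∈ Finset.Ico 1 k, e i / (e i - e 0)) = P
    generalize (∑ j ∈ Finset.Ico 1 k, Cf e k j / e j) = Sd
    generalize (∑ j ∈ Finset.Ico 1 k, Cf e k j * (1 + θ * e j)⁻¹) = Sv
    field_simp
    ring
  have hnonneg : ∀ θ ∈ Set.Ioi (0:ℝ), 0 ≤ ((1 + θ * e 0)^2)⁻¹ * ∏ j ∈ Finset.Ico 1 k, (1 - 1/(1 + θ * e j)) := by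
    intro θ hθ
    have hθ' : (0:ℝ) ≤ θ := le_of_lt hθ
    apply mul_nonneg (inv_nonneg.2 (sq_nonneg _))
    apply Finset.prod_nonneg
    intro j hj
    have h1 : 0 < 1 + θ * e j := hposθ θ hθ' j (Finset.mem_Ico.1 hj).2
    have h2 : 1/(1 + θ * e j) ≤ 1 := by
      rw [div_le_one h1]
      nlinarith [hpos j (Finset.mem_Ico.1 hj).2]
    linarith
  have htop : Tendsto (Gf e k) atTop (𝓝 ((∏ i ∈ Finset.Ico 1 k, e i / (e i - e 0)) * (1/e 0)
      + ∑ j ∈ Finset.Ico 1 k, (Cf e k j / e j) * Real.log (e j / e 0))) := by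
    have hinv0 : Tendsto (fun θ : ℝ => (1 + θ * e 0)⁻¹) atTop (𝓝 0) := by
      apply Filter.Tendsto.inv_tendsto_atTop
      apply tendsto_atTop_add_const_left
      exact Tendsto.atTop_mul_const h0pos tendsto_id
    have h1 : Tendsto (fun θ : ℝ => (∏ i ∈ Finset.Ico 1 k, e i / (e i - e 0)) * (1/e 0) * (1 - (1 + θ * e 0)⁻¹)) atTop (𝓝 ((∏ i ∈ Finset.Ico 1 k, e i / (e i - e 0)) * (1/e 0))) := by
      have := ((tendsto_const_nhds (x := (1:ℝ)) (f := atTop)).sub hinv0).const_mul ((∏ i ∈ Finset.Ico 1 k, e i / (e i - e 0)) * (1/e 0))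
      simpa using this
    have h2 : ∀ j ∈ Finset.Ico 1 k, Tendsto (fun θ : ℝ =>
        (Cf e k j / e j) * (Real.log (1 + θ * e j) - Real.log (1 + θ * e 0))) atTop
        (𝓝 ((Cf e k j / e j) * Real.log (e j / e 0))) := by
      intro j hj
      have hej : 0 < e j := hjpos j hj
      have hratio : Tendsto (fun θ : ℝ => (θ⁻¹ + e j) / (θ⁻¹ + e 0)) atTop (𝓝 (e j / e 0)) := by
        have hn : Tendsto (fun θ : ℝ => θ⁻¹ + e j) atTop (𝓝 (0 + e j)) :=
          tendsto_inv_atTop_zero.add_const _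
        have hd : Tendsto (fun θ : ℝ => θ⁻¹ + e 0) atTop (𝓝 (0 + e 0)) :=
          tendsto_inv_atTop_zero.add_const _
        have := hn.div hd (by simpa using h0pos.ne')
        simpa [Pi.div_def] using this
      have hlog : Tendsto (fun θ : ℝ => Real.log ((θ⁻¹ + e j) / (θ⁻¹ + e 0))) atTop
          (𝓝 (Real.log (e j / e 0))) :=
        (Real.continuousAt_log (by positivity)).tendsto.comp hratio
      have heq : (fun θ : ℝ => Real.log ((θ⁻¹ + e j) / (θ⁻¹ + e 0)))
          =ᶠ[atTop] fun θ : ℝ => Real.log (1 + θ * e j) - Real.log (1 + θ * e 0) := by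
        filter_upwards [eventually_gt_atTop (0:ℝ)] with θ hθ
        have hθ0 : θ ≠ 0 := hθ.ne'
        have hj1 : 0 < 1 + θ * e j := hposθ θ hθ.le j (Finset.mem_Ico.1 hj).2
        have h01 : 0 < 1 + θ * e 0 := hposθ θ hθ.le 0 (by omega)
        have hre : (θ⁻¹ + e j) / (θ⁻¹ + e 0) = (1 + θ * e j) / (1 + θ * e 0) := by
          rw [div_eq_div_iff (by positivity) h01.ne']
          field_simp
        rw [hre, Real.log_div hj1.ne' h01.ne']
      exact (Filter.Tendsto.congr' heq hlog).const_mul _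
    have := h1.add (tendsto_finset_sum _ h2)
    exact this
  have hint : (∫ θ in Set.Ioi (0:ℝ),
      ((1 + θ * e 0)^2)⁻¹ * ∏ j ∈ Finset.Ico 1 k, (1 - 1/(1 + θ * e j)))
      = ((∏ i ∈ Finset.Ico 1 k, e i / (e i - e 0)) * (1/e 0)
        + ∑ j ∈ Finset.Ico 1 k, (Cf e k j / e j) * Real.log (e j / e 0)) - Gf e k 0 :=
    integral_Ioi_of_hasDerivAt_of_nonneg' hderiv hnonneg htop
  rw [hint, Gf_zero, sub_zero]
  have hsum : ∑ j ∈ Finset.Ico 1 k, (Cf e k j / e j) * Real.log (e j / e 0)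
      = ∑ j ∈ Finset.Ico 1 k, (e j / (e j - e 0) ^ 2) *
          (∏ i ∈ (Finset.Ico 1 k).erase j, e i / (e i - e j)) * Real.log (e 0 / e j) := by
    refine Finset.sum_congr rfl fun j hj => ?_
    have hej : e j ≠ 0 := (hjpos j hj).ne'
    have hlog : Real.log (e j / e 0) = - Real.log (e 0 / e j) := by
      rw [← Real.log_inv, inv_div]
    have hd : e j - e 0 ≠ 0 := sub_ne_zero.2 (hdist j (Finset.mem_Ico.1 hj).2 0 (by omega)
      (by have := (Finset.mem_Ico.1 hj).1; omega))
    simp only [Cf]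
    rw [hlog]
    generalize (∏ i ∈ (Finset.Ico 1 k).erase j, e i / (e i - e j)) = P
    field_simp
  rw [hsum]
  ring
end

section
/- For every integer k ≥ 2 and pairwise distinct positive real numbers e₀, e₁, …, e_{k−1}, one has ∫₀^1 (1+θe₀)^{−2} ∏_{j=1}^{k−1} (1 − 1/(1+θe_j)) dθ = (1/(1+e₀))·∏_{i=1}^{k−1} e_i/(e_i−e₀) + ∑_{j=1}^{k−1} [e_j/(e_j−e₀)²]·(∏_{1≤i≤k−1, i≠j} e_i/(e_i−e_j))·log((1+e₀)/(1+e_j)). -/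
/-!
The integrand is a rational function of `θ` with a double pole at `-1/e₀` and simple poles
at `-1/eⱼ`; the right-hand side integrates its partial fraction decomposition over `[0, 1]`.
For distinct nonzero `eⱼ`,
`∏ⱼ (1 - 1/(1 + θ eⱼ)) = 1 - ∑ⱼ Lⱼ/(1 + θ eⱼ)` with `Lⱼ = ∏_{i ≠ j} eᵢ/(eᵢ - eⱼ)`,
by induction on the index set: the coefficient of the new pole `-1/eₘ` is the inductive
hypothesis evaluated at `θ = -1/eₘ`. Evaluating the same identity at `θ = -1/e₀` gives the
coefficient `∏ᵢ eᵢ/(eᵢ - e₀)` of `(1 + θ e₀)⁻²`; the other terms integrate to logarithms.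
-/

open MeasureTheory Real

section PartialFractions

variable {K ι : Type*} [Field K] [DecidableEq ι] {S : Finset ι} {e : ι → K}

theorem one_sub_one_div_mul_one_div_eq {a b θ : K} (hab : a ≠ b) (ha : 1 + θ * a ≠ 0)
    (hb : 1 + θ * b ≠ 0) :
    (1 - 1 / (1 + θ * a)) * (1 / (1 + θ * b)) =
      a / (a - b) * (1 / (1 + θ * b) - 1 / (1 + θ * a)) := by
  have : a - b ≠ 0 := sub_ne_zero.2 hab
  field_simp
  ring

/-- At `θ = -1/c` the factor `1 - 1/(1 + θ eⱼ)` becomes `eⱼ/(eⱼ - c)`. -/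
theorem prod_div_sub_eq_of_forall_prod_one_sub_one_div
    (h : ∀ θ : K, (∀ j ∈ S, 1 + θ * e j ≠ 0) →
      ∏ j ∈ S, (1 - 1 / (1 + θ * e j)) =
        1 - ∑ j ∈ S, (∏ i ∈ S.erase j, e i / (e i - e j)) * (1 / (1 + θ * e j)))
    {c : K} (hc : c ≠ 0) (hce : ∀ j ∈ S, e j ≠ c) :
    ∏ j ∈ S, e j / (e j - c) =
      1 - ∑ j ∈ S, (∏ i ∈ S.erase j, e i / (e i - e j)) * (c / (c - e j)) := by
  have hval : ∀ j ∈ S, 1 + -c⁻¹ * e j = (c - e j) / c := fun j _ => by field_simp; ring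
  have hsub : ∀ j ∈ S, c - e j ≠ 0 := fun j hj => sub_ne_zero.2 (hce j hj).symm
  convert h (-c⁻¹) fun j hj => by rw [hval j hj]; exact div_ne_zero (hsub j hj) hc using 1
  · refine Finset.prod_congr rfl fun j hj => ?_
    have := hsub j hj
    have : e j - c ≠ 0 := sub_ne_zero.2 (hce j hj)
    rw [hval j hj]
    field_simp
    ring
  · refine congrArg _ (Finset.sum_congr rfl fun j hj => ?_)
    rw [hval j hj, one_div_div]

theorem prod_one_sub_one_div_eq_one_sub_sum (he : ∀ j ∈ S, e j ≠ 0) (hinj : Set.InjOn e S)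
    (θ : K) (hθ : ∀ j ∈ S, 1 + θ * e j ≠ 0) :
    ∏ j ∈ S, (1 - 1 / (1 + θ * e j)) =
      1 - ∑ j ∈ S, (∏ i ∈ S.erase j, e i / (e i - e j)) * (1 / (1 + θ * e j)) := by
  induction S using Finset.induction_on generalizing θ with
  | empty => simp
  | @insert m S hm ih =>
    simp only [Finset.mem_insert, forall_eq_or_imp] at he hθ
    rw [Finset.coe_insert, Set.injOn_insert (by exact_mod_cast hm)] at hinj
    have hem : ∀ j ∈ S, e m ≠ e j := fun j hj hmj => hinj.2 ⟨j, hj, hmj.symm⟩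
    have ih := ih he.2 hinj.1
    have hcoef :=
      prod_div_sub_eq_of_forall_prod_one_sub_one_div ih he.1 fun j hj => (hem j hj).symm
    set u := fun j => 1 / (1 + θ * e j)
    set L := fun j => ∏ i ∈ S.erase j, e i / (e i - e j)
    set r := fun j => e m / (e m - e j)
    calc ∏ j ∈ insert m S, (1 - u j)
        = (1 - u m) * (1 - ∑ j ∈ S, L j * u j) := by rw [Finset.prod_insert hm, ih θ hθ.2]
      _ = 1 - u m - ∑ j ∈ S, L j * ((1 - u m) * u j) := by
        rw [mul_sub, Finset.mul_sum]; simp only [mul_left_comm]; ring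
      _ = 1 - u m - ∑ j ∈ S, L j * (r j * (u j - u m)) := by
        congr 1
        refine Finset.sum_congr rfl fun j hj => ?_
        rw [one_sub_one_div_mul_one_div_eq (hem j hj) hθ.1 (hθ.2 j hj)]
      _ = 1 - (1 - ∑ j ∈ S, L j * r j) * u m - ∑ j ∈ S, L j * r j * u j := by
        simp only [mul_sub, sub_mul, Finset.sum_sub_distrib, Finset.sum_mul, one_mul]
        ring_nf
      _ = 1 - ∑ j ∈ insert m S, (∏ i ∈ (insert m S).erase j, e i / (e i - e j)) * u j := by
        rw [← hcoef, Finset.sum_insert hm, Finset.erase_insert hm, sub_sub]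
        congr 2
        refine Finset.sum_congr rfl fun j hj => ?_
        rw [Finset.erase_insert_of_ne (ne_of_mem_of_not_mem hj hm).symm,
          Finset.prod_insert fun h => hm (Finset.mem_of_mem_erase h)]
        ring

theorem inv_sq_mul_one_div_eq {a b θ : K} (hab : a ≠ b) (ha : 1 + θ * a ≠ 0)
    (hb : 1 + θ * b ≠ 0) :
    ((1 + θ * a) ^ 2)⁻¹ * (1 / (1 + θ * b)) =
      a / (a - b) * ((1 + θ * a) ^ 2)⁻¹ -
        b / (b - a) ^ 2 * (a / (1 + θ * a) - b / (1 + θ * b)) := by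
  have : a - b ≠ 0 := sub_ne_zero.2 hab
  have : b - a ≠ 0 := sub_ne_zero.2 hab.symm
  field_simp
  ring

theorem inv_sq_mul_prod_one_sub_one_div_eq {a : K} (ha : a ≠ 0) (he : ∀ j ∈ S, e j ≠ 0)
    (hea : ∀ j ∈ S, e j ≠ a) (hinj : Set.InjOn e S) (θ : K) (hθa : 1 + θ * a ≠ 0)
    (hθe : ∀ j ∈ S, 1 + θ * e j ≠ 0) :
    ((1 + θ * a) ^ 2)⁻¹ * ∏ j ∈ S, (1 - 1 / (1 + θ * e j)) =
      (∏ i ∈ S, e i / (e i - a)) * ((1 + θ * a) ^ 2)⁻¹ +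
        ∑ j ∈ S, e j / (e j - a) ^ 2 * (∏ i ∈ S.erase j, e i / (e i - e j)) *
          (a / (1 + θ * a) - e j / (1 + θ * e j)) := by
  have hprod := prod_one_sub_one_div_eq_one_sub_sum he hinj
  rw [prod_div_sub_eq_of_forall_prod_one_sub_one_div hprod ha hea, hprod θ hθe]
  set w := ((1 + θ * a) ^ 2)⁻¹
  set L := fun j => ∏ i ∈ S.erase j, e i / (e i - e j)
  calc w * (1 - ∑ j ∈ S, L j * (1 / (1 + θ * e j)))
      = w - ∑ j ∈ S, L j * (w * (1 / (1 + θ * e j))) := by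
        rw [mul_sub, Finset.mul_sum]; simp only [mul_left_comm]; ring
    _ = w - ∑ j ∈ S, L j * (a / (a - e j) * w -
          e j / (e j - a) ^ 2 * (a / (1 + θ * a) - e j / (1 + θ * e j))) := by
        congr 1
        refine Finset.sum_congr rfl fun j hj => ?_
        rw [inv_sq_mul_one_div_eq (hea j hj).symm hθa (hθe j hj)]
    _ = _ := by
        rw [sub_mul, one_mul, Finset.sum_mul, sub_add, ← Finset.sum_sub_distrib]
        exact congrArg _ (Finset.sum_congr rfl fun j _ => by ring)

end PartialFractions

section UnitIntervalIntegrals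

variable {a : ℝ}

theorem one_add_mul_pos (ha : -1 < a) {θ : ℝ} (hθ : θ ∈ Set.uIcc (0 : ℝ) 1) :
    0 < 1 + θ * a := by
  rw [Set.uIcc_of_le zero_le_one] at hθ
  rcases le_total 0 a with h | h
  · nlinarith [mul_nonneg hθ.1 h]
  · nlinarith [mul_nonneg (sub_nonneg.2 hθ.2) (neg_nonneg.2 h)]

theorem intervalIntegrable_inv_one_add_mul_sq (ha : -1 < a) :
    IntervalIntegrable (fun θ : ℝ => ((1 + θ * a) ^ 2)⁻¹) volume 0 1 :=
  ContinuousOn.intervalIntegrable <| ContinuousOn.inv₀ (by fun_prop) fun _ hθ =>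
    (pow_pos (one_add_mul_pos ha hθ) 2).ne'

theorem intervalIntegrable_div_one_add_mul (ha : -1 < a) :
    IntervalIntegrable (fun θ : ℝ => a / (1 + θ * a)) volume 0 1 :=
  ContinuousOn.intervalIntegrable <| continuousOn_const.div (by fun_prop) fun _ hθ =>
    (one_add_mul_pos ha hθ).ne'

theorem integral_inv_one_add_mul_sq (ha : -1 < a) :
    ∫ θ in (0 : ℝ)..1, ((1 + θ * a) ^ 2)⁻¹ = 1 / (1 + a) := by
  have hderiv : ∀ θ ∈ Set.uIcc (0 : ℝ) 1,
      HasDerivAt (fun t => t / (1 + t * a)) ((1 + θ * a) ^ 2)⁻¹ θ := by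
    intro θ hθ
    have hpos := one_add_mul_pos ha hθ
    refine (hasDerivAt_id' (x := θ)).div ((hasDerivAt_id' .. |>.mul_const a).const_add 1)
      hpos.ne' |>.congr_deriv ?_
    field_simp
    ring
  rw [intervalIntegral.integral_eq_sub_of_hasDerivAt hderiv
    (intervalIntegrable_inv_one_add_mul_sq ha)]
  simp

theorem integral_div_one_add_mul (ha : -1 < a) :
    ∫ θ in (0 : ℝ)..1, a / (1 + θ * a) = log (1 + a) := by
  have hderiv : ∀ θ ∈ Set.uIcc (0 : ℝ) 1,
      HasDerivAt (fun t => log (1 + t * a)) (a / (1 + θ * a)) θ := by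
    intro θ hθ
    refine ((hasDerivAt_id' (x := θ)).mul_const a |>.const_add 1).log
      (one_add_mul_pos ha hθ).ne' |>.congr_deriv ?_
    rw [one_mul]
  rw [intervalIntegral.integral_eq_sub_of_hasDerivAt hderiv
    (intervalIntegrable_div_one_add_mul ha)]
  simp

theorem integral_div_one_add_mul_sub_div_one_add_mul {b : ℝ} (ha : -1 < a) (hb : -1 < b) :
    ∫ θ in (0 : ℝ)..1, (a / (1 + θ * a) - b / (1 + θ * b)) = log ((1 + a) / (1 + b)) := by
  rw [intervalIntegral.integral_sub (intervalIntegrable_div_one_add_mul ha)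
    (intervalIntegrable_div_one_add_mul hb), integral_div_one_add_mul ha,
    integral_div_one_add_mul hb, log_div (by linarith) (by linarith)]

theorem integral_inv_sq_add_sum_sub_div {ι : Type*} {S : Finset ι} {b : ι → ℝ} (ha : -1 < a)
    (hb : ∀ j ∈ S, -1 < b j) (P : ℝ) (c : ι → ℝ) :
    ∫ θ in (0 : ℝ)..1, (P * ((1 + θ * a) ^ 2)⁻¹ +
        ∑ j ∈ S, c j * (a / (1 + θ * a) - b j / (1 + θ * b j))) =
      1 / (1 + a) * P + ∑ j ∈ S, c j * log ((1 + a) / (1 + b j)) := by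
  have hint : ∀ j ∈ S, IntervalIntegrable
      (fun θ : ℝ => c j * (a / (1 + θ * a) - b j / (1 + θ * b j))) volume 0 1 := fun j hj =>
    ((intervalIntegrable_div_one_add_mul ha).sub
      (intervalIntegrable_div_one_add_mul (hb j hj))).const_mul _
  rw [intervalIntegral.integral_add ((intervalIntegrable_inv_one_add_mul_sq ha).const_mul P)
    (by simpa only [Finset.sum_fn] using IntervalIntegrable.sum S hint),
    intervalIntegral.integral_finsetSum hint, intervalIntegral.integral_const_mul,
    integral_inv_one_add_mul_sq ha, mul_comm]
  congr 1
  refine Finset.sum_congr rfl fun j hj => ?_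
  rw [intervalIntegral.integral_const_mul,
    integral_div_one_add_mul_sub_div_one_add_mul ha (hb j hj)]

end UnitIntervalIntegrals

/-- Lemma A.1 (partial fractions integral, second part): for pairwise distinct positive
reals `e 0, …, e (k-1)` (`k ≥ 2`),
`∫₀^1 (1+θe₀)⁻² ∏_{j=1}^{k-1} (1 − 1/(1+θeⱼ)) dθ
  = (1/(1+e₀)) ∏_{i=1}^{k-1} eᵢ/(eᵢ−e₀)
    + ∑_{j=1}^{k-1} (eⱼ/(eⱼ−e₀)²) (∏_{i≠j} eᵢ/(eᵢ−eⱼ)) log((1+e₀)/(1+eⱼ))`. -/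
theorem integral_partial_fractions_unit_interval
    (k : ℕ) (hk : 2 ≤ k) (e : ℕ → ℝ)
    (hpos : ∀ i < k, 0 < e i)
    (hdist : ∀ i < k, ∀ j < k, i ≠ j → e i ≠ e j) :
    ∫ θ in (0 : ℝ)..1,
        ((1 + θ * e 0) ^ 2)⁻¹ * ∏ j ∈ Finset.Ico 1 k, (1 - 1 / (1 + θ * e j))
      = (1 / (1 + e 0)) * ∏ i ∈ Finset.Ico 1 k, e i / (e i - e 0)
        + ∑ j ∈ Finset.Ico 1 k,
            (e j / (e j - e 0) ^ 2) *
              (∏ i ∈ (Finset.Ico 1 k).erase j, e i / (e i - e j)) *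
                Real.log ((1 + e 0) / (1 + e j)) := by
  have he0 : 0 < e 0 := hpos 0 (by omega)
  have he : ∀ j ∈ Finset.Ico 1 k, 0 < e j := fun j hj => hpos j (Finset.mem_Ico.1 hj).2
  have hne : ∀ j ∈ Finset.Ico 1 k, e j ≠ e 0 := fun j hj =>
    hdist j (Finset.mem_Ico.1 hj).2 0 (by omega)
      (Nat.one_le_iff_ne_zero.1 (Finset.mem_Ico.1 hj).1)
  have hinj : Set.InjOn e (Finset.Ico 1 k) := fun i hi j hj hij => by
    by_contra h
    exact hdist i (Finset.mem_Ico.1 hi).2 j (Finset.mem_Ico.1 hj).2 h hij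
  rw [intervalIntegral.integral_congr fun θ hθ =>
    inv_sq_mul_prod_one_sub_one_div_eq he0.ne' (fun j hj => (he j hj).ne') hne hinj θ
      (one_add_mul_pos (by linarith) hθ).ne'
      fun j hj => (one_add_mul_pos (by linarith [he j hj]) hθ).ne']
  exact integral_inv_sq_add_sum_sub_div (by linarith) (fun j hj => by linarith [he j hj]) _ _
end

section
/- Let α ≥ 0 and β > 0 with α ≠ β, let T ≥ 0, let s₀ ∈ [0,T] and let y ∈ [0,1]. Then ∫_{s₀}^{T} e^{(β−α)(T−s)} / (β(1−y)e^{(β−α)(T−s)} + βy − α)² ds = (e^{(β−α)(T−s₀)} − 1) / ((β−α)² · (β(1−y)e^{(β−α)(T−s₀)} + βy − α)). -/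
open MeasureTheory Real

/-!
Substituting `t = T - s` turns the integral into `∫₀^τ e^{ct} / (a e^{ct} + b)² dt` with
`a = β(1-y) ≥ 0`, `b = βy - α` and `c = a + b = β - α`. Since `d/du [(u - 1)/(a u + b)] = c/(a u + b)²`,
the function `(e^{ct} - 1)/(c² (a e^{ct} + b))` is an antiderivative, and it is defined on all of `[0, τ]`
because `a e^{ct} + b = c + a (e^{ct} - 1)` has the sign of `c` for `t ≥ 0`.
-/

lemma mul_exp_mul_sub_one_nonneg (c : ℝ) {t : ℝ} (ht : 0 ≤ t) : 0 ≤ c * (exp (c * t) - 1) := by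
  rcases le_total 0 c with hc | hc
  · exact mul_nonneg hc (sub_nonneg.mpr (one_le_exp (mul_nonneg hc ht)))
  · exact mul_nonneg_of_nonpos_of_nonpos hc
      (sub_nonpos.mpr (exp_le_one_iff.mpr (mul_nonpos_of_nonpos_of_nonneg hc ht)))

lemma mul_mul_exp_add_pos {a b t : ℝ} (ha : 0 ≤ a) (hab : a + b ≠ 0) (ht : 0 ≤ t) :
    0 < (a + b) * (a * exp ((a + b) * t) + b) := by
  have hsq : 0 < (a + b) ^ 2 := by positivity
  nlinarith [mul_nonneg ha (mul_exp_mul_sub_one_nonneg (a + b) ht)]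

lemma hasDerivAt_exp_sub_one_div {a b : ℝ} (hab : a + b ≠ 0) {t : ℝ}
    (hden : a * exp ((a + b) * t) + b ≠ 0) :
    HasDerivAt (fun t => (exp ((a + b) * t) - 1) / ((a + b) ^ 2 * (a * exp ((a + b) * t) + b)))
      (exp ((a + b) * t) / (a * exp ((a + b) * t) + b) ^ 2) t := by
  have hexp : HasDerivAt (fun t => exp ((a + b) * t)) (exp ((a + b) * t) * (a + b)) t :=
    ((hasDerivAt_id t).const_mul (a + b)).exp.congr_deriv (by simp)
  refine ((hexp.sub_const 1).div ((hexp.const_mul a |>.add_const b).const_mul ((a + b) ^ 2))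
    (mul_ne_zero (pow_ne_zero 2 hab) hden)).congr_deriv ?_
  field_simp
  ring

theorem integral_exp_div_mul_exp_add_sq {a b c τ : ℝ} (ha : 0 ≤ a) (habc : a + b = c)
    (hc : c ≠ 0) (hτ : 0 ≤ τ) :
    ∫ t in 0..τ, exp (c * t) / (a * exp (c * t) + b) ^ 2
      = (exp (c * τ) - 1) / (c ^ 2 * (a * exp (c * τ) + b)) := by
  subst habc
  have hden : ∀ t ∈ Set.uIcc 0 τ, a * exp ((a + b) * t) + b ≠ 0 := by
    intro t ht
    rw [Set.uIcc_of_le hτ] at ht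
    exact right_ne_zero_of_mul (mul_mul_exp_add_pos ha hc ht.1).ne'
  have hcont : ContinuousOn (fun t => exp ((a + b) * t) / (a * exp ((a + b) * t) + b) ^ 2)
      (Set.uIcc 0 τ) :=
    (by fun_prop : Continuous _).continuousOn.div (by fun_prop)
      fun t ht => pow_ne_zero 2 (hden t ht)
  rw [intervalIntegral.integral_eq_sub_of_hasDerivAt
    (fun t ht => hasDerivAt_exp_sub_one_div hc (hden t ht)) hcont.intervalIntegrable]
  simp

theorem integral_birth_death_kernel_general
    (α β T s₀ y : ℝ) (hβ : 0 < β) (hαβ : α ≠ β)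
    (hs₀ : s₀ ∈ Set.Icc 0 T) (hy : y ∈ Set.Icc (0 : ℝ) 1) :
    ∫ s in s₀..T,
        Real.exp ((β - α) * (T - s)) /
          (β * (1 - y) * Real.exp ((β - α) * (T - s)) + β * y - α) ^ 2
      = (Real.exp ((β - α) * (T - s₀)) - 1) /
          ((β - α) ^ 2 *
            (β * (1 - y) * Real.exp ((β - α) * (T - s₀)) + β * y - α)) := by
  have ha : 0 ≤ β * (1 - y) := mul_nonneg hβ.le (sub_nonneg.mpr hy.2)
  have habc : β * (1 - y) + (β * y - α) = β - α := by ring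
  simp only [add_sub_assoc]
  rw [intervalIntegral.integral_comp_sub_left
    (fun t => exp ((β - α) * t) / (β * (1 - y) * exp ((β - α) * t) + (β * y - α)) ^ 2) T,
    sub_self]
  exact integral_exp_div_mul_exp_add_sq ha habc (sub_ne_zero.mpr hαβ.symm)
    (sub_nonneg.mpr hs₀.2)

/-- Lemma A.2 (first part): for a birth-death process with death rate `α ≥ 0` and
birth rate `β > 0`, `α ≠ β`, for `0 ≤ s₀ ≤ T` and `y ∈ [0,1]`,
`∫_{s₀}^T e^{(β−α)(T−s)} / (β(1−y)e^{(β−α)(T−s)} + βy − α)² ds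
  = (e^{(β−α)(T−s₀)} − 1) / ((β−α)² (β(1−y)e^{(β−α)(T−s₀)} + βy − α))`. -/
theorem integral_birth_death_kernel
    (α β T s₀ y : ℝ) (hα : 0 ≤ α) (hβ : 0 < β) (hαβ : α ≠ β)
    (hT : 0 ≤ T) (hs₀ : s₀ ∈ Set.Icc 0 T) (hy : y ∈ Set.Icc (0 : ℝ) 1) :
    ∫ s in s₀..T,
        Real.exp ((β - α) * (T - s)) /
          (β * (1 - y) * Real.exp ((β - α) * (T - s)) + β * y - α) ^ 2
      = (Real.exp ((β - α) * (T - s₀)) - 1) /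
          ((β - α) ^ 2 *
            (β * (1 - y) * Real.exp ((β - α) * (T - s₀)) + β * y - α)) :=
  integral_birth_death_kernel_general α β T s₀ y hβ hαβ hs₀ hy
end

section
/- Let (Ω, F, P) be a probability space, let k ≥ 1 be an integer, and let N : Ω → ℕ be a random variable with N ≥ k almost surely. Then E[1/(N(N−1)⋯(N−k+1))] = (1/(k−1)!) · ∫₀^∞ (e^z − 1)^{k−1} · E[e^{−zN}] dz. -/
/-!
Write `I m a = ∫₀^∞ (eᶻ - 1)ᵐ e^{-za} dz`. Since
`(eᶻ - 1)ᵐ⁺¹ e^{-za} = (eᶻ - 1)ᵐ e^{-z(a-1)} - (eᶻ - 1)ᵐ e^{-za}`, we get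
`I (m + 1) a = I m (a - 1) - I m a`, and induction on `m` gives
`I m a = m! / (a (a - 1) ⋯ (a - m))` for `a > m`. Take `a = N ω` and swap the two integrals
(Fubini applies because the integrand is at most `e^{-z}` when `N ≥ m + 1`).
-/

open MeasureTheory Real Finset Set Nat

lemma exp_sub_one_pow_succ_mul_exp_neg_mul (m : ℕ) (a z : ℝ) :
    (exp z - 1) ^ (m + 1) * exp (-z * a)
      = (exp z - 1) ^ m * exp (-z * (a - 1)) - (exp z - 1) ^ m * exp (-z * a) := by
  have : exp (-z * (a - 1)) = exp z * exp (-z * a) := by rw [← exp_add]; ring_nf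
  rw [this]; ring

lemma integrableOn_exp_sub_one_pow_mul_exp_neg_mul (m : ℕ) {a : ℝ} (ha : m < a) :
    IntegrableOn (fun z ↦ (exp z - 1) ^ m * exp (-z * a)) (Ioi 0) := by
  induction m generalizing a with
  | zero =>
    simp only [CharP.cast_eq_zero] at ha
    simpa [mul_comm a] using exp_neg_integrableOn_Ioi 0 ha
  | succ m ih =>
    push_cast at ha
    simp_rw [exp_sub_one_pow_succ_mul_exp_neg_mul]
    exact (ih (by linarith)).sub (ih (by linarith))

lemma integral_exp_sub_one_pow_mul_exp_neg_mul (m : ℕ) {a : ℝ} (ha : m < a) :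
    ∫ z in Ioi 0, (exp z - 1) ^ m * exp (-z * a) = m ! / ∏ i ∈ range (m + 1), (a - i) := by
  induction m generalizing a with
  | zero =>
    simp only [CharP.cast_eq_zero] at ha
    simpa [mul_comm, neg_div] using integral_exp_mul_Ioi (neg_lt_zero.2 ha) 0
  | succ m ih =>
    push_cast at ha
    simp_rw [exp_sub_one_pow_succ_mul_exp_neg_mul]
    rw [integral_sub (integrableOn_exp_sub_one_pow_mul_exp_neg_mul m (by linarith))
      (integrableOn_exp_sub_one_pow_mul_exp_neg_mul m (by linarith)), ih (by linarith),
      ih (by linarith)]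
    have hpos : ∀ b : ℝ, m < b → 0 < ∏ i ∈ range (m + 1), (b - i) := fun b hb ↦
      prod_pos fun i hi ↦ by
        have : (i : ℝ) ≤ m := by exact_mod_cast Nat.lt_succ_iff.1 (mem_range.1 hi)
        linarith
    have h₁ := hpos (a - 1) (by linarith)
    have h₂ := hpos a (by linarith)
    have hlow : ∏ i ∈ range (m + 2), (a - i) = (∏ i ∈ range (m + 1), (a - 1 - i)) * a := by
      rw [prod_range_succ']
      push_cast
      simp only [sub_sub, add_comm (1 : ℝ), sub_zero]
    have hhigh :
        ∏ i ∈ range (m + 2), (a - i) = (∏ i ∈ range (m + 1), (a - i)) * (a - (m + 1)) := by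
      rw [prod_range_succ]; push_cast; ring
    rw [hlow, factorial_succ, div_sub_div _ _ h₁.ne' h₂.ne', div_eq_div_iff (by positivity)
      (mul_pos h₁ (by linarith)).ne']
    push_cast
    linear_combination (-(m ! * ∏ i ∈ range (m + 1), (a - 1 - i) : ℝ)) * hlow.symm.trans hhigh

lemma norm_exp_sub_one_pow_mul_exp_neg_mul_le (m : ℕ) {a z : ℝ} (ha : m + 1 ≤ a) (hz : 0 ≤ z) :
    ‖(exp z - 1) ^ m * exp (-z * a)‖ ≤ exp (-z) := by
  have h₀ : 0 ≤ exp z - 1 := by linarith [one_le_exp hz]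
  rw [Real.norm_of_nonneg (by positivity)]
  calc (exp z - 1) ^ m * exp (-z * a) ≤ exp z ^ m * exp (-z * a) := by
        gcongr; linarith
    _ = exp (-z + z * (m + 1 - a)) := by rw [← exp_nat_mul, ← exp_add]; ring_nf
    _ ≤ exp (-z) := exp_le_exp.2 <| by nlinarith

lemma integral_exp_sub_one_pow_mul_integral_exp_neg_mul {Ω : Type*} [MeasurableSpace Ω]
    (P : Measure Ω) [IsFiniteMeasure P] (m : ℕ) {X : Ω → ℝ} (hX : Measurable X)
    (hXm : ∀ᵐ ω ∂P, m + 1 ≤ X ω) :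
    ∫ z in Ioi 0, (exp z - 1) ^ m * ∫ ω, exp (-z * X ω) ∂P
      = ∫ ω, m ! / ∏ i ∈ range (m + 1), (X ω - i) ∂P := by
  set f : Ω × ℝ → ℝ := fun p ↦ (exp p.2 - 1) ^ m * exp (-p.2 * X p.1)
  have hf : Integrable f (P.prod (volume.restrict (Ioi 0))) := by
    refine Integrable.mono' ((integrableOn_exp_neg_Ioi 0).comp_snd P) (by fun_prop) ?_
    filter_upwards [Measure.quasiMeasurePreserving_fst.ae hXm,
      Measure.quasiMeasurePreserving_snd.ae (ae_restrict_mem measurableSet_Ioi)] with p hp hz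
    exact norm_exp_sub_one_pow_mul_exp_neg_mul_le m hp hz.le
  calc ∫ z in Ioi 0, (exp z - 1) ^ m * ∫ ω, exp (-z * X ω) ∂P
      = ∫ z in Ioi 0, ∫ ω, f (ω, z) ∂P := by simp only [f, integral_const_mul]
    _ = ∫ ω, (∫ z in Ioi 0, f (ω, z)) ∂P := (integral_integral_swap hf).symm
    _ = ∫ ω, m ! / ∏ i ∈ range (m + 1), (X ω - i) ∂P := integral_congr_ae <| hXm.mono
          fun ω hω ↦ integral_exp_sub_one_pow_mul_exp_neg_mul m (by linarith)

/-- Lemma 4.8 (reciprocal descending factorial formula): if `N ≥ k` almost surely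
(`k ≥ 1`), then
`E[1/(N(N−1)⋯(N−k+1))] = (1/(k−1)!) ∫₀^∞ (e^z − 1)^{k−1} E[e^{−zN}] dz`. -/
theorem integral_inv_descFactorial
    {Ω : Type*} [MeasurableSpace Ω] (P : Measure Ω) [IsProbabilityMeasure P]
    (k : ℕ) (hk : 1 ≤ k) (N : Ω → ℕ) (hN : Measurable N)
    (hNk : ∀ᵐ ω ∂P, k ≤ N ω) :
    ∫ ω, 1 / ∏ i ∈ Finset.range k, ((N ω : ℝ) - (i : ℝ)) ∂P
      = (1 / (Nat.factorial (k - 1) : ℝ)) *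
          ∫ z in Set.Ioi (0 : ℝ),
            (Real.exp z - 1) ^ (k - 1) * ∫ ω, Real.exp (-z * (N ω : ℝ)) ∂P := by
  obtain ⟨m, rfl⟩ := Nat.exists_eq_add_of_le' hk
  rw [Nat.add_sub_cancel, integral_exp_sub_one_pow_mul_integral_exp_neg_mul P m
    (X := fun ω ↦ (N ω : ℝ)) (by fun_prop) (hNk.mono fun ω hω ↦ by exact_mod_cast hω),
    ← integral_const_mul]
  congr 1 with ω
  field_simp
end

section
/- Let k ≥ 2 be an integer and let ν be the probability measure on ℝ given by the density x ↦ (1+x)^{−2} on (0,∞) with respect to Lebesgue measure. Let s₁, …, s_{k−1} ∈ (0,1) be pairwise distinct. Then, under the k-fold product measure ν^{⊗k} on ℝ^k, k · ν^{⊗k}( { x : x_i ≤ (1−s_i)·x_k for all i = 1, …, k−1 } ) = k·∏_{i=1}^{k−1} (s_i−1)/s_i − k·∑_{j=1}^{k−1} ((1−s_j)/s_j²)·(∏_{1≤i≤k−1, i≠j} (1−s_i)/(s_j−s_i))·log(1−s_j). -/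
/-!
Conditioning on the last coordinate `y`, the probability is `∫ ∏ᵢ ν(-∞, aᵢy] dν(y)` with
`aᵢ = 1 - sᵢ`, and `ν(-∞, t] = t / (1 + t)` for `t ≥ 0`. The partial fraction expansion
`∏ᵢ aᵢy / (1 + aᵢy) = 1 - ∑ⱼ Pⱼ / (1 + aⱼy)`, `Pⱼ = ∏_{i ≠ j} aᵢ / (aᵢ - aⱼ)`, reduces the
integral to the elementary integrals `∫₀^∞ (1 + ay)⁻¹ (1 + y)⁻² dy = 1/(1 - a) + a log a/(1 - a)²`,
and the same expansion at `y = -1` collects their rational parts into `∏ᵢ aᵢ / (aᵢ - 1)`.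
-/

open MeasureTheory Real Finset Set Filter Topology
open scoped ENNReal

theorem prod_mul_div_one_add_mul_eq_one_sub_sum {ι : Type*} [DecidableEq ι] {S : Finset ι}
    {a : ι → ℝ} (ha : ∀ i ∈ S, a i ≠ 0) (hinj : Set.InjOn a S) {y : ℝ}
    (hy : ∀ i ∈ S, 1 + a i * y ≠ 0) :
    ∏ i ∈ S, a i * y / (1 + a i * y)
      = 1 - ∑ j ∈ S, (∏ i ∈ S.erase j, a i / (a i - a j)) / (1 + a j * y) := by
  induction S using Finset.induction_on generalizing y with
  | empty => simp
  | insert m S hm ih =>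
    have hm0 : a m ≠ 0 := ha m (mem_insert_self m S)
    have hym : 1 + a m * y ≠ 0 := hy m (mem_insert_self m S)
    have ha' : ∀ i ∈ S, a i ≠ 0 := fun i hi => ha i (mem_insert_of_mem hi)
    have hinj' : Set.InjOn a S := hinj.mono (by simp)
    have hyS : ∀ j ∈ S, 1 + a j * y ≠ 0 := fun j hj => hy j (mem_insert_of_mem hj)
    have hne : ∀ j ∈ S, a m - a j ≠ 0 := fun j hj => sub_ne_zero.2 fun h =>
      hm (hinj (mem_insert_self m S) (mem_insert_of_mem hj) h ▸ hj)
    have hpole : ∀ j, 1 + a j * -(a m)⁻¹ = (a m - a j) / a m := fun j => by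
      field_simp
      ring
    set P : ι → ℝ := fun j => ∏ i ∈ S.erase j, a i / (a i - a j)
    -- the induction hypothesis at the pole `y = -1 / a m` of the new factor
    have hP : ∏ i ∈ S, a i / (a i - a m) = 1 - ∑ j ∈ S, P j * (a m / (a m - a j)) := by
      convert ih ha' hinj' (y := -(a m)⁻¹) (fun j hj => by
        rw [hpole j]; exact div_ne_zero (hne j hj) hm0) using 1
      · refine prod_congr rfl fun i _ => ?_
        rw [hpole i, ← neg_sub (a m) (a i)]
        field_simp
      · refine congrArg _ (sum_congr rfl fun j _ => ?_)
        rw [hpole j, div_div_eq_mul_div, mul_div_assoc]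
    have hnew : ∀ j ∈ S, (∏ i ∈ (insert m S).erase j, a i / (a i - a j)) / (1 + a j * y)
        = P j * (a m / (a m - a j)) / (1 + a j * y) := by
      intro j hj
      have hmj : m ≠ j := fun h => hm (h ▸ hj)
      rw [erase_insert_of_ne hmj, prod_insert fun h => hm (mem_of_mem_erase h), mul_comm]
    have hterm : ∀ j ∈ S, a m * y / (1 + a m * y) * (P j / (1 + a j * y))
          = P j * (a m / (a m - a j)) / (1 + a j * y)
            - P j * (a m / (a m - a j)) / (1 + a m * y) := by
      intro j hj
      have hyj := hyS j hj
      rw [div_sub_div _ _ hyj hym, div_mul_div_comm,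
        div_eq_div_iff (mul_ne_zero hym hyj) (mul_ne_zero hyj hym)]
      field_simp [hne j hj]
      ring
    rw [prod_insert hm, sum_insert hm, erase_insert hm, sum_congr rfl hnew, hP,
      ih ha' hinj' hyS, mul_sub, mul_sum, sum_congr rfl hterm, sum_sub_distrib, ← sum_div,
      ← sub_eq_zero]
    field_simp
    ring

theorem hasDerivAt_neg_inv_one_add {x : ℝ} (hx : 1 + x ≠ 0) :
    HasDerivAt (fun y => -(1 + y)⁻¹) ((1 + x) ^ 2)⁻¹ x := by
  refine (((hasDerivAt_id' x).const_add 1).inv hx).neg.congr_deriv ?_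
  rw [neg_div, neg_neg, one_div]

theorem tendsto_log_one_add_mul_sub_log_one_add {a : ℝ} (ha : 0 < a) :
    Tendsto (fun y => log (1 + a * y) - log (1 + y)) atTop (𝓝 (log a)) := by
  have hratio : Tendsto (fun y => a + (1 - a) * (1 + y)⁻¹) atTop (𝓝 a) := by
    simpa using tendsto_const_nhds.add
      ((tendsto_inv_atTop_zero.comp (tendsto_atTop_add_const_left _ 1 tendsto_id)).const_mul
        (1 - a))
  refine (((continuousAt_log ha.ne').tendsto.comp hratio)).congr' ?_
  filter_upwards [eventually_gt_atTop 0] with y hy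
  have h1y : 0 < 1 + y := by linarith
  have h1ay : 0 < 1 + a * y := by positivity
  rw [Function.comp_apply, ← log_div h1ay.ne' h1y.ne']
  congr 1
  field_simp
  ring

theorem integrableOn_and_integral_Ioi_inv_one_add_mul_mul_inv_sq {a : ℝ} (ha₀ : 0 ≤ a)
    (ha₁ : a ≠ 1) :
    IntegrableOn (fun y => (1 + a * y)⁻¹ * ((1 + y) ^ 2)⁻¹) (Ioi 0) ∧
      ∫ y in Ioi 0, (1 + a * y)⁻¹ * ((1 + y) ^ 2)⁻¹ = (1 - a)⁻¹ + a * log a / (1 - a) ^ 2 := by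
  have h1a : 1 - a ≠ 0 := sub_ne_zero.2 ha₁.symm
  set F : ℝ → ℝ := fun y =>
    a / (1 - a) ^ 2 * (log (1 + a * y) - log (1 + y)) + (1 - a)⁻¹ * -(1 + y)⁻¹
  have hF : ∀ x ∈ Ici (0 : ℝ), HasDerivAt F ((1 + a * x)⁻¹ * ((1 + x) ^ 2)⁻¹) x := by
    intro x (hx : 0 ≤ x)
    have h1x : 0 < 1 + x := by linarith
    have h1ax : 0 < 1 + a * x := by positivity
    have hlog := ((((hasDerivAt_id' x).const_mul a).const_add 1).log h1ax.ne').sub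
      (((hasDerivAt_id' x).const_add 1).log h1x.ne')
    refine ((hlog.const_mul (a / (1 - a) ^ 2)).add
      ((hasDerivAt_neg_inv_one_add h1x.ne').const_mul (1 - a)⁻¹)).congr_deriv ?_
    field_simp
    ring
  have hnonneg : ∀ x ∈ Ioi (0 : ℝ), 0 ≤ (1 + a * x)⁻¹ * ((1 + x) ^ 2)⁻¹ :=
    fun x (hx : 0 < x) => by positivity
  have hlim : Tendsto F atTop (𝓝 (a / (1 - a) ^ 2 * log a + (1 - a)⁻¹ * -0)) := by
    refine Tendsto.add ?_ ((tendsto_inv_atTop_zero.comp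
      (tendsto_atTop_add_const_left _ 1 tendsto_id)).neg.const_mul _)
    rcases ha₀.eq_or_lt with rfl | ha
    · simp
    · exact (tendsto_log_one_add_mul_sub_log_one_add ha).const_mul _
  refine ⟨integrableOn_Ioi_deriv_of_nonneg' hF hnonneg hlim, ?_⟩
  rw [integral_Ioi_of_hasDerivAt_of_nonneg' hF hnonneg hlim]
  simp only [F, neg_zero, mul_zero, add_zero, mul_neg, log_one, sub_self, inv_one, mul_one,
    zero_add, sub_neg_eq_add]
  ring

theorem integrableOn_and_integral_Ioi_inv_sq_one_add :
    IntegrableOn (fun y : ℝ => ((1 + y) ^ 2)⁻¹) (Ioi 0) ∧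
      ∫ y in Ioi (0 : ℝ), ((1 + y) ^ 2)⁻¹ = 1 := by
  simpa using integrableOn_and_integral_Ioi_inv_one_add_mul_mul_inv_sq le_rfl zero_ne_one

theorem integral_Ioi_prod_mul_div_one_add_mul_mul_inv_sq {ι : Type*} [DecidableEq ι]
    {S : Finset ι} {a : ι → ℝ} (ha₀ : ∀ i ∈ S, 0 < a i) (ha₁ : ∀ i ∈ S, a i ≠ 1)
    (hinj : Set.InjOn a S) :
    ∫ y in Ioi 0, (∏ i ∈ S, a i * y / (1 + a i * y)) * ((1 + y) ^ 2)⁻¹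
      = ∏ i ∈ S, a i / (a i - 1)
        - ∑ j ∈ S, a j / (1 - a j) ^ 2 * (∏ i ∈ S.erase j, a i / (a i - a j)) * log (a j) := by
  set P : ι → ℝ := fun j => ∏ i ∈ S.erase j, a i / (a i - a j)
  have hne : ∀ i ∈ S, a i ≠ 0 := fun i hi => (ha₀ i hi).ne'
  obtain ⟨hint, hval⟩ := integrableOn_and_integral_Ioi_inv_sq_one_add
  have hI := fun j (hj : j ∈ S) =>
    integrableOn_and_integral_Ioi_inv_one_add_mul_mul_inv_sq (ha₀ j hj).le (ha₁ j hj)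
  have hsplit : EqOn (fun y => (∏ i ∈ S, a i * y / (1 + a i * y)) * ((1 + y) ^ 2)⁻¹)
      (fun y => ((1 + y) ^ 2)⁻¹ - ∑ j ∈ S, P j * ((1 + a j * y)⁻¹ * ((1 + y) ^ 2)⁻¹)) (Ioi 0) := by
    intro y (hy : 0 < y)
    dsimp only
    rw [prod_mul_div_one_add_mul_eq_one_sub_sum hne hinj fun i hi => by
      have := ha₀ i hi; positivity, sub_mul, one_mul, sum_mul]
    simp only [P, div_eq_mul_inv, mul_assoc]
  have hpole : ∏ i ∈ S, a i / (a i - 1) = 1 - ∑ j ∈ S, P j * (1 - a j)⁻¹ := by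
    convert prod_mul_div_one_add_mul_eq_one_sub_sum hne hinj (y := -1) (fun i hi => by
      rw [mul_neg_one, ← sub_eq_add_neg]; exact sub_ne_zero.2 (ha₁ i hi).symm) using 2
    · rw [mul_neg_one, ← sub_eq_add_neg, ← neg_sub, div_neg, neg_div]
    · refine sum_congr rfl fun j _ => ?_
      rw [mul_neg_one, ← sub_eq_add_neg, div_eq_mul_inv]
  rw [setIntegral_congr_fun measurableSet_Ioi hsplit,
    integral_sub hint (integrable_finsetSum _ fun j hj => (hI j hj).1.const_mul _),
    integral_finsetSum _ fun j hj => (hI j hj).1.const_mul _, hval, hpole, sub_sub,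
    ← sum_add_distrib]
  refine congrArg _ (sum_congr rfl fun j hj => ?_)
  rw [integral_const_mul, (hI j hj).2]
  ring

noncomputable def criticalLaw : Measure ℝ :=
  (volume.restrict (Ioi 0)).withDensity fun x => ENNReal.ofReal ((1 + x) ^ 2)⁻¹

theorem withDensity_ite_eq_criticalLaw :
    (volume.withDensity fun x : ℝ => ENNReal.ofReal (if 0 < x then ((1 + x) ^ 2)⁻¹ else 0))
      = criticalLaw := by
  rw [criticalLaw, ← withDensity_indicator measurableSet_Ioi]
  congr with x
  by_cases hx : 0 < x <;> simp [hx]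

instance : SigmaFinite criticalLaw := SigmaFinite.withDensity_ofReal _

theorem lintegral_criticalLaw (f : ℝ → ℝ≥0∞) :
    ∫⁻ y, f y ∂criticalLaw = ∫⁻ y in Ioi 0, ENNReal.ofReal ((1 + y) ^ 2)⁻¹ * f y :=
  lintegral_withDensity_eq_lintegral_mul_non_measurable _
    (by fun_prop) (ae_of_all _ fun _ => ENNReal.ofReal_lt_top) f

theorem criticalLaw_Iic {t : ℝ} (ht : 0 ≤ t) :
    criticalLaw (Iic t) = ENNReal.ofReal (t / (1 + t)) := by
  have hint : IntegrableOn (fun x : ℝ => ((1 + x) ^ 2)⁻¹) (Ioc 0 t) :=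
    integrableOn_and_integral_Ioi_inv_sq_one_add.1.mono_set Ioc_subset_Ioi_self
  rw [criticalLaw, withDensity_apply _ measurableSet_Iic,
    Measure.restrict_restrict measurableSet_Iic,
    Iic_inter_Ioi, ← ofReal_integral_eq_lintegral_ofReal hint (ae_of_all _ fun _ => by positivity),
    ← intervalIntegral.integral_of_le ht, intervalIntegral.integral_eq_sub_of_hasDerivAt
      (fun x hx => hasDerivAt_neg_inv_one_add ?_)
      ((intervalIntegrable_iff_integrableOn_Ioc_of_le ht).2 hint)]
  · congr 1
    field_simp
    ring
  · rw [uIcc_of_le ht] at hx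
    linarith [hx.1]

theorem measure_pi_castSucc_le_mul_last {n : ℕ} (ν : Measure ℝ) [SigmaFinite ν] (a : Fin n → ℝ) :
    Measure.pi (fun _ : Fin (n + 1) => ν) {x | ∀ j : Fin n, x j.castSucc ≤ a j * x (Fin.last n)}
      = ∫⁻ y, ∏ j, ν (Iic (a j * y)) ∂ν := by
  set T : Set (ℝ × (Fin n → ℝ)) := {p | ∀ j, p.2 j ≤ a j * p.1}
  have hT : MeasurableSet T := by
    simp only [T, ofPred_forall]
    exact .iInter fun j => measurableSet_le (by fun_prop) (by fun_prop)
  have hpre : {x : Fin (n + 1) → ℝ | ∀ j : Fin n, x j.castSucc ≤ a j * x (Fin.last n)}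
      = MeasurableEquiv.piFinSuccAbove (fun _ => ℝ) (Fin.last n) ⁻¹' T := by
    ext x
    simp [T, MeasurableEquiv.piFinSuccAbove_apply, Fin.init]
  rw [hpre, (measurePreserving_piFinSuccAbove (fun _ => ν) (Fin.last n)).measure_preimage
    hT.nullMeasurableSet, Measure.prod_apply hT]
  refine lintegral_congr fun y => ?_
  have hslice : Prod.mk y ⁻¹' T = univ.pi fun j => Iic (a j * y) := by
    ext z
    simp [T, Pi.le_def]
  rw [hslice, Measure.pi_pi]

theorem toReal_lintegral_prod_criticalLaw_Iic {ι : Type*} (S : Finset ι) {a : ι → ℝ}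
    (ha : ∀ i ∈ S, 0 ≤ a i) :
    (∫⁻ y, ∏ i ∈ S, criticalLaw (Iic (a i * y)) ∂criticalLaw).toReal
      = ∫ y in Ioi 0, (∏ i ∈ S, a i * y / (1 + a i * y)) * ((1 + y) ^ 2)⁻¹ := by
  have hprod : ∀ y ∈ Ioi (0 : ℝ), ∀ i ∈ S, 0 ≤ a i * y / (1 + a i * y) :=
    fun y (hy : 0 < y) i hi => by
      have := ha i hi
      positivity
  rw [integral_eq_lintegral_of_nonneg_ae, lintegral_criticalLaw]
  · congr 1
    refine setLIntegral_congr_fun measurableSet_Ioi fun y (hy : 0 < y) => ?_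
    rw [mul_comm, ENNReal.ofReal_mul (prod_nonneg (hprod y hy)),
      ENNReal.ofReal_prod_of_nonneg (hprod y hy)]
    refine congrArg (· * _) (prod_congr rfl fun i hi => criticalLaw_Iic ?_)
    have := ha i hi
    positivity
  · filter_upwards [ae_restrict_mem measurableSet_Ioi] with y hy
    exact mul_nonneg (prod_nonneg (hprod y hy)) (by positivity)
  · fun_prop

/-- Theorem 2.6 (construction of the critical scaling limit): let `ν` be the law on `ℝ`
with density `(1+x)⁻²` on `(0,∞)`.  For pairwise distinct `s₁, …, s_{k−1} ∈ (0,1)`,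
under the `k`-fold product `ν^{⊗k}`,
`k · ν^{⊗k}{x : xᵢ ≤ (1−sᵢ)x_k, i = 1,…,k−1}`
equals the limiting joint distribution function of the critical split times:
`k ∏_{i=1}^{k−1} (sᵢ−1)/sᵢ − k ∑_{j=1}^{k−1} ((1−s_j)/s_j²)(∏_{i≠j}(1−sᵢ)/(s_j−sᵢ)) log(1−s_j)`.
(Coordinates are indexed by `Fin k`, with `x i` for `0 ≤ i ≤ k−2` playing the role of
`x_{i+1}` and `x ⟨k−1⟩` that of `x_k`.) -/
theorem critical_genealogy_construction
    (k : ℕ) (hk : 2 ≤ k) (s : ℕ → ℝ)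
    (hs : ∀ i ∈ Finset.Ico 1 k, s i ∈ Set.Ioo (0 : ℝ) 1)
    (hdist : ∀ i ∈ Finset.Ico 1 k, ∀ j ∈ Finset.Ico 1 k, i ≠ j → s i ≠ s j) :
    (k : ℝ) *
        ((Measure.pi fun _ : Fin k =>
            volume.withDensity fun x : ℝ =>
              ENNReal.ofReal (if 0 < x then ((1 + x) ^ 2)⁻¹ else 0))
          {x : Fin k → ℝ | ∀ i : Fin k, (i : ℕ) + 1 < k →
            x i ≤ (1 - s ((i : ℕ) + 1)) * x ⟨k - 1, by omega⟩}).toReal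
      = (k : ℝ) * ∏ i ∈ Finset.Ico 1 k, (s i - 1) / s i
        - (k : ℝ) * ∑ j ∈ Finset.Ico 1 k,
            ((1 - s j) / (s j) ^ 2) *
              (∏ i ∈ (Finset.Ico 1 k).erase j, (1 - s i) / (s j - s i)) *
                Real.log (1 - s j) := by
  obtain ⟨n, rfl⟩ : ∃ n, k = n + 1 := ⟨k - 1, by omega⟩
  have hset : {x : Fin (n + 1) → ℝ | ∀ i : Fin (n + 1), (i : ℕ) + 1 < n + 1 →
      x i ≤ (1 - s ((i : ℕ) + 1)) * x ⟨n + 1 - 1, by omega⟩}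
      = {x | ∀ j : Fin n, x j.castSucc ≤ (1 - s ((j : ℕ) + 1)) * x (Fin.last n)} := by
    ext x
    simp [Fin.forall_fin_succ', Fin.last]
  have hreindex (f : ℕ → ℝ≥0∞) : ∏ j : Fin n, f (j + 1) = ∏ i ∈ Ico 1 (n + 1), f i := by
    rw [Fin.prod_univ_eq_prod_range (fun j => f (j + 1)), range_eq_Ico, prod_Ico_add']
  have hinj : InjOn (fun i => 1 - s i) (Finset.Ico 1 (n + 1) : Set ℕ) := fun i hi j hj h => by
    by_contra hij
    exact hdist i hi j hj hij (sub_right_injective h)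
  rw [withDensity_ite_eq_criticalLaw, hset, measure_pi_castSucc_le_mul_last,
    lintegral_congr fun y => hreindex fun i => criticalLaw (Iic ((1 - s i) * y)),
    toReal_lintegral_prod_criticalLaw_Iic _ fun i hi => (sub_pos.2 (hs i hi).2).le,
    integral_Ioi_prod_mul_div_one_add_mul_mul_inv_sq (fun i hi => sub_pos.2 (hs i hi).2)
      (fun i hi h => (hs i hi).1.ne' (sub_eq_self.1 h)) hinj]
  simp only [sub_sub_cancel, sub_sub_sub_cancel_left, sub_sub_cancel_left, div_neg, neg_div',
    neg_sub, mul_sub]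
end

section
/- Let 0 ≤ α < β and s > 0, and set c = β − α. For T > s define E₀(T) = e^{cT}, E₁(T) = e^{c(T−s)}, and Φ(T) = (2(E₀(T)−α/β)²/(E₀(T)−1)) · [ (E₁(T)−1)/((E₀(T)−α/β)(E₁(T)−E₀(T))) + ((E₁(T)−1)/(E₁(T)−E₀(T))²)·log((βE₀(T)−α)/(βE₁(T)−α)) ]. Then Φ(T) converges, as T → ∞, to (2e^{−cs}/(1−e^{−cs})²)·(cs − 1 + e^{−cs}). -/
open Real Filter

set_option maxHeartbeats 1600000

/-- Supercritical birth–death example: with `0 ≤ α < β`, `c = β − α` and `s > 0`, the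
exact coalescence-time formula `Φ(T)` (with `E₀ = e^{cT}`, `E₁ = e^{c(T−s)}`) converges
as `T → ∞` to `(2e^{−cs}/(1−e^{−cs})²)(cs − 1 + e^{−cs})`. -/
theorem supercritical_birth_death_limit
    (α β s : ℝ) (hα : 0 ≤ α) (hαβ : α < β) (hs : 0 < s) :
    Tendsto (fun T : ℝ =>
        (2 * (Real.exp ((β - α) * T) - α / β) ^ 2 / (Real.exp ((β - α) * T) - 1)) *
          ((Real.exp ((β - α) * (T - s)) - 1) /
              ((Real.exp ((β - α) * T) - α / β) *
                (Real.exp ((β - α) * (T - s)) - Real.exp ((β - α) * T)))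
            + ((Real.exp ((β - α) * (T - s)) - 1) /
                (Real.exp ((β - α) * (T - s)) - Real.exp ((β - α) * T)) ^ 2) *
                Real.log ((β * Real.exp ((β - α) * T) - α) /
                  (β * Real.exp ((β - α) * (T - s)) - α))))
      atTop
      (nhds ((2 * Real.exp (-((β - α) * s)) / (1 - Real.exp (-((β - α) * s))) ^ 2) *
        ((β - α) * s - 1 + Real.exp (-((β - α) * s))))) := by
  have hβ : 0 < β := lt_of_le_of_lt hα hαβ
  set c : ℝ := β - α with hc
  have hc0 : 0 < c := sub_pos.2 hαβ
  set q : ℝ := Real.exp (-(c * s)) with hq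
  have hq0 : 0 < q := Real.exp_pos _
  have hq1 : q < 1 := by
    rw [hq, Real.exp_lt_one_iff]
    nlinarith
  have hqne : q - 1 ≠ 0 := by linarith
  have hlogq : Real.log q = -(c * s) := Real.log_exp _
  have hab : α / β < 1 := (div_lt_one hβ).2 hαβ
  have hab0 : 0 ≤ α / β := div_nonneg hα hβ.le
  -- the auxiliary function of u = e^{-cT}
  set g : ℝ → ℝ := fun u =>
    2 * (1 - (α / β) * u) ^ 2 / (1 - u) *
      ((q - u) / ((1 - (α / β) * u) * (q - 1)) +
        (q - u) / (q - 1) ^ 2 * Real.log ((β - α * u) / (β * q - α * u))) with hg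
  have hcont : ContinuousAt g 0 := by
    have h1 : ContinuousAt (fun u : ℝ => (β - α * u) / (β * q - α * u)) 0 := by
      apply ContinuousAt.div (by fun_prop) (by fun_prop)
      simp only [mul_zero, sub_zero]
      positivity
    have hlog : ContinuousAt (fun u : ℝ => Real.log ((β - α * u) / (β * q - α * u))) 0 := by
      apply (Real.continuousAt_log ?_).comp h1
      simp only [mul_zero, sub_zero]
      positivity
    apply ContinuousAt.mul
    · apply ContinuousAt.div (by fun_prop) (by fun_prop)
      norm_num
    · apply ContinuousAt.add
      · apply ContinuousAt.div (by fun_prop) (by fun_prop)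
        simpa using hqne
      · exact ContinuousAt.mul (by fun_prop) hlog
  have hg0 : g 0 = (2 * q / (1 - q) ^ 2) * (c * s - 1 + q) := by
    have hlogval : Real.log ((β - α * 0) / (β * q - α * 0)) = c * s := by
      have harg : (β - α * 0) / (β * q - α * 0) = q⁻¹ := by
        rw [mul_zero, sub_zero, sub_zero]
        field_simp
      rw [harg, Real.log_inv, hlogq]
      ring
    rw [hg]
    simp only [hlogval]
    have h1q : (1 - q) ≠ 0 := by linarith
    have hβne : β ≠ 0 := hβ.ne'
    simp only [mul_zero, sub_zero]
    field_simp
    ring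
  have hexp : Tendsto (fun T : ℝ => Real.exp (-(c * T))) atTop (nhds 0) := by
    exact Real.tendsto_exp_atBot.comp
      (tendsto_neg_atTop_atBot.comp (Tendsto.const_mul_atTop hc0 tendsto_id))
  have key : Tendsto (fun T : ℝ => g (Real.exp (-(c * T)))) atTop
      (nhds ((2 * q / (1 - q) ^ 2) * (c * s - 1 + q))) := by
    rw [← hg0]
    exact (hcont.tendsto).comp hexp
  apply key.congr'
  filter_upwards [eventually_gt_atTop 0] with T hT
  set u : ℝ := Real.exp (-(c * T)) with hu
  have hu0 : 0 < u := Real.exp_pos _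
  have hu1 : u < 1 := by
    rw [hu, Real.exp_lt_one_iff]
    nlinarith
  have hE0 : Real.exp (c * T) = u⁻¹ := by
    rw [hu, ← Real.exp_neg, neg_neg]
  have hE1 : Real.exp (c * (T - s)) = u⁻¹ * q := by
    rw [hu, hq, ← Real.exp_neg, ← Real.exp_add, neg_neg]
    ring_nf
  rw [hE0, hE1]
  -- rewrite the log argument
  have hlogarg : (β - α * u) / (β * q - α * u) = (β * u⁻¹ - α) / (β * (u⁻¹ * q) - α) := by
    have h1 : β * u⁻¹ - α = (β - α * u) * u⁻¹ := by
      field_simp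
    have h2 : β * (u⁻¹ * q) - α = (β * q - α * u) * u⁻¹ := by
      field_simp
    rw [h1, h2, mul_div_mul_right _ _ (inv_ne_zero hu0.ne')]
  rw [hg]
  beta_reduce
  rw [hlogarg]
  set L : ℝ := Real.log ((β * u⁻¹ - α) / (β * (u⁻¹ * q) - α)) with hL
  have h1u : (1 : ℝ) - u ≠ 0 := by linarith
  have h2u : (1 : ℝ) - (α / β) * u ≠ 0 := by nlinarith
  have hiu : u⁻¹ - 1 ≠ 0 := by
    have : 1 < u⁻¹ := (one_lt_inv_iff₀).2 ⟨hu0, hu1⟩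
    linarith
  have e1 : u⁻¹ - α / β = (1 - (α / β) * u) / u := by
    field_simp; try ring
  have e2 : u⁻¹ - 1 = (1 - u) / u := by
    field_simp; try ring
  have e3 : u⁻¹ * q - u⁻¹ = (q - 1) / u := by
    field_simp; try ring
  have e4 : u⁻¹ * q - 1 = (q - u) / u := by
    field_simp; try ring
  rw [e1, e2, e3, e4]
  have f1 : 2 * ((1 - (α / β) * u) / u) ^ 2 / ((1 - u) / u)
      = 2 * (1 - (α / β) * u) ^ 2 / (1 - u) * u⁻¹ := by
    field_simp
  have f2 : (q - u) / u / ((1 - (α / β) * u) / u * ((q - 1) / u))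
      = (q - u) / ((1 - (α / β) * u) * (q - 1)) * u := by
    rw [div_mul_div_comm, div_div_div_eq, mul_comm u u]
    rw [show (q - u) * (u * u) = (q - u) * u * u from by ring,
      show u * ((1 - α / β * u) * (q - 1)) = (1 - α / β * u) * (q - 1) * u from by ring,
      mul_div_mul_right _ _ hu0.ne', mul_div_right_comm]
  have f3 : (q - u) / u / ((q - 1) / u) ^ 2 = (q - u) / (q - 1) ^ 2 * u := by
    field_simp
  rw [f1, f2, f3]
  have : (q - u) / ((1 - α / β * u) * (q - 1)) * u + (q - u) / (q - 1) ^ 2 * u * L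
      = u * ((q - u) / ((1 - α / β * u) * (q - 1)) + (q - u) / (q - 1) ^ 2 * L) := by
    ring
  rw [this, mul_assoc, ← mul_assoc u⁻¹ u, inv_mul_cancel₀ hu0.ne', one_mul]
end

section
/- Let 0 < β < α and s > 0, and set c = α − β. For T > s define E₀(T) = e^{−cT}, E₁ = e^{−cs}, and Φ(T) = (2(E₀(T)−α/β)²/(E₀(T)−1)) · [ (E₁−1)/((E₀(T)−α/β)(E₁−E₀(T))) + ((E₁−1)/(E₁−E₀(T))²)·log((βE₀(T)−α)/(βE₁−α)) ]. Then Φ(T) converges, as T → ∞, to (2α²/β²)·(e^{cs} − 1)·(e^{cs}·log(1 + β/(αe^{cs} − β)) − β/α). -/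
open Real Filter

/-- Subcritical birth–death example: with `0 < β < α`, `c = α − β` and `s > 0`, the
exact coalescence-time formula `Φ(T)` (with `E₀(T) = e^{−cT}`, `E₁ = e^{−cs}`)
converges as `T → ∞` to
`(2α²/β²)(e^{cs} − 1)(e^{cs} log(1 + β/(αe^{cs} − β)) − β/α)`. -/
theorem subcritical_birth_death_limit
    (α β s : ℝ) (hβ : 0 < β) (hβα : β < α) (hs : 0 < s) :
    Tendsto (fun T : ℝ =>
        (2 * (Real.exp (-((α - β) * T)) - α / β) ^ 2 / (Real.exp (-((α - β) * T)) - 1)) *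
          ((Real.exp (-((α - β) * s)) - 1) /
              ((Real.exp (-((α - β) * T)) - α / β) *
                (Real.exp (-((α - β) * s)) - Real.exp (-((α - β) * T))))
            + ((Real.exp (-((α - β) * s)) - 1) /
                (Real.exp (-((α - β) * s)) - Real.exp (-((α - β) * T))) ^ 2) *
                Real.log ((β * Real.exp (-((α - β) * T)) - α) /
                  (β * Real.exp (-((α - β) * s)) - α))))
      atTop
      (nhds ((2 * α ^ 2 / β ^ 2) * (Real.exp ((α - β) * s) - 1) *
        (Real.exp ((α - β) * s) *
            Real.log (1 + β / (α * Real.exp ((α - β) * s) - β)) - β / α))) := by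
  set c : ℝ := α - β with hc_def
  have hc : 0 < c := sub_pos.mpr hβα
  set E₁ : ℝ := Real.exp (-(c * s)) with hE1_def
  have hE1pos : 0 < E₁ := Real.exp_pos _
  have hE1lt1 : E₁ < 1 := by
    rw [hE1_def]
    exact Real.exp_lt_one_iff.mpr (by nlinarith)
  have hαβE1 : β * E₁ - α < 0 := by nlinarith
  have hα : 0 < α := hβ.trans hβα
  -- the key exponential identity
  have hEE : Real.exp (c * s) * E₁ = 1 := by
    rw [hE1_def, ← Real.exp_add]; simp
  set g : ℝ → ℝ := fun e =>
    (2 * (e - α / β) ^ 2 / (e - 1)) *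
      ((E₁ - 1) / ((e - α / β) * (E₁ - e))
        + ((E₁ - 1) / (E₁ - e) ^ 2) * Real.log ((β * e - α) / (β * E₁ - α))) with hg_def
  have h0 : Tendsto (fun T : ℝ => Real.exp (-(c * T))) atTop (nhds 0) := by
    apply Real.tendsto_exp_atBot.comp
    have : Tendsto (fun T : ℝ => c * T) atTop atTop :=
      tendsto_id.const_mul_atTop hc
    exact tendsto_neg_atTop_atBot.comp this
  have hcont : ContinuousAt g 0 := by
    have h1 : (0 : ℝ) - 1 ≠ 0 := by norm_num
    have h2 : (0 : ℝ) - α / β ≠ 0 := by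
      have h : 0 < α / β := div_pos hα hβ
      rw [sub_ne_zero]
      exact h.ne
    have h3 : ((0 : ℝ) - α / β) * (E₁ - 0) ≠ 0 :=
      mul_ne_zero h2 (by simpa using hE1pos.ne')
    have h4 : (E₁ - (0:ℝ)) ^ 2 ≠ 0 := pow_ne_zero _ (by simpa using hE1pos.ne')
    have h5 : (β * (0:ℝ) - α) / (β * E₁ - α) ≠ 0 := by
      apply div_ne_zero
      · simpa using hα.ne'
      · exact hαβE1.ne
    apply ContinuousAt.mul
    · apply ContinuousAt.div
      · fun_prop
      · fun_prop
      · exact h1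
    · apply ContinuousAt.add
      · exact ContinuousAt.div (by fun_prop) (by fun_prop) h3
      · apply ContinuousAt.mul
        · exact ContinuousAt.div (by fun_prop) (by fun_prop) h4
        · exact ContinuousAt.log
            (ContinuousAt.div (by fun_prop) continuousAt_const hαβE1.ne) h5
  have hmain : Tendsto (fun T : ℝ => g (Real.exp (-(c * T)))) atTop (nhds (g 0)) :=
    hcont.tendsto.comp h0
  have hval : g 0 =
      (2 * α ^ 2 / β ^ 2) * (Real.exp (c * s) - 1) *
        (Real.exp (c * s) * Real.log (1 + β / (α * Real.exp (c * s) - β)) - β / α) := by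
    have hD : 0 < α * Real.exp (c * s) - β := by
      nlinarith [Real.add_one_le_exp (c * s), mul_pos hc hs]
    have hlogeq : Real.log ((β * (0:ℝ) - α) / (β * E₁ - α)) =
        Real.log (1 + β / (α * Real.exp (c * s) - β)) := by
      congr 1
      have hE : Real.exp (c * s) = 1 / E₁ := by
        field_simp at hEE ⊢; linarith [hEE]
      have hne1 : α - β * E₁ ≠ 0 := by nlinarith
      have hne2 : -α + β * E₁ ≠ 0 := by nlinarith
      rw [hE]
      field_simp [hne1, hne2]
      have hd : α - E₁ * β ≠ 0 := by nlinarith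
      rw [div_eq_iff hαβE1.ne]
      field_simp [hd]
      ring
    rw [hg_def]
    simp only
    rw [hlogeq]
    set L := Real.log (1 + β / (α * Real.exp (c * s) - β))
    have hE : Real.exp (c * s) = 1 / E₁ := by
      field_simp at hEE ⊢; linarith [hEE]
    rw [hE]
    field_simp [hE1pos.ne', hα.ne']
    ring
  rw [hval] at hmain
  exact hmain
end

section
/- Let 0 < β < α and set c = α − β. Define L(s) = (2α²/β²)·(e^{cs} − 1)·(e^{cs}·log(1 + β/(αe^{cs} − β)) − β/α). Then (1 − L(s))·e^{cs} → 1 − 2β/(3α) as s → ∞. -/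
open Real Filter

/-- Algebraic identity: rewrite the expression in terms of `y = β/(α x)` and
`Q = (−log(1−y) − y − y²/2)/y³`. -/
lemma tail_algebraic_identity (α β x : ℝ) (hβ : 0 < β) (hβα : β < α) (hx : 1 ≤ x) :
    (1 - (2 * α ^ 2 / β ^ 2) * (x - 1) *
        (x * Real.log (1 + β / (α * x - β)) - β / α)) * x
      = 1 - (2 * β / α) * ((-(Real.log (1 - β / (α * x))) - β / (α * x)
            - (β / (α * x)) ^ 2 / 2) / (β / (α * x)) ^ 3)
          + 2 * (β / (α * x)) * ((-(Real.log (1 - β / (α * x))) - β / (α * x)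
            - (β / (α * x)) ^ 2 / 2) / (β / (α * x)) ^ 3) := by
  have hα : 0 < α := hβ.trans hβα
  have hx0 : 0 < x := lt_of_lt_of_le one_pos hx
  have hαx : 0 < α * x := mul_pos hα hx0
  have hden : 0 < α * x - β := by nlinarith
  set y : ℝ := β / (α * x) with hy
  have hy0 : 0 < y := div_pos hβ hαx
  have hyne : y ≠ 0 := ne_of_gt hy0
  have h1y : 1 - y = (α * x - β) / (α * x) := by
    rw [hy]; field_simp
  have h1ypos : 0 < 1 - y := by rw [h1y]; positivity
  have hlog : Real.log (1 + β / (α * x - β)) = -(Real.log (1 - y)) := by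
    have : 1 + β / (α * x - β) = (1 - y)⁻¹ := by
      rw [h1y]; field_simp; ring
    rw [this, Real.log_inv]
  set Q : ℝ := (-(Real.log (1 - y)) - y - y ^ 2 / 2) / y ^ 3 with hQ
  have hL : Real.log (1 - y) = -(y + y ^ 2 / 2 + y ^ 3 * Q) := by
    have : Q * y ^ 3 = -(Real.log (1 - y)) - y - y ^ 2 / 2 := by
      rw [hQ]; field_simp
    linarith [this]
  rw [hlog, hL]
  have hxy : x = β / (α * y) := by
    rw [hy]; field_simp
  rw [hxy]
  field_simp
  ring

/-- Taylor bound: `Q(y) = (−log(1−y) − y − y²/2)/y³` is within `y/(1−y)` of `1/3`. -/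
lemma Q_bound (y : ℝ) (h0 : 0 < y) (h1 : y < 1) :
    |(-(Real.log (1 - y)) - y - y ^ 2 / 2) / y ^ 3 - 1 / 3| ≤ y / (1 - y) := by
  have hy : |y| < 1 := by rw [abs_of_pos h0]; exact h1
  have h := Real.abs_log_sub_add_sum_range_le hy 3
  have hsum : (∑ i ∈ Finset.range 3, y ^ (i + 1) / (i + 1)) = y + y ^ 2 / 2 + y ^ 3 / 3 := by
    rw [Finset.sum_range_succ, Finset.sum_range_succ, Finset.sum_range_succ,
      Finset.sum_range_zero]
    norm_num
  rw [hsum, abs_of_pos h0] at h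
  have hy3 : (0:ℝ) < y ^ 3 := by positivity
  have h1y : (0:ℝ) < 1 - y := by linarith
  have heq : (-(Real.log (1 - y)) - y - y ^ 2 / 2) / y ^ 3 - 1 / 3
      = -((y + y ^ 2 / 2 + y ^ 3 / 3) + Real.log (1 - y)) / y ^ 3 := by
    field_simp; ring
  rw [heq, abs_div, abs_neg, abs_of_pos hy3]
  have h2 : |(y + y ^ 2 / 2 + y ^ 3 / 3) + Real.log (1 - y)| / y ^ 3
      ≤ (y ^ 4 / (1 - y)) / y ^ 3 := by gcongr
  have h3 : (y ^ 4 / (1 - y)) / y ^ 3 = y / (1 - y) := by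
    field_simp
  rw [h3] at h2
  exact h2

/-- Tail asymptotic in the subcritical case: with `0 < β < α`, `c = α − β` and
`L(s) = (2α²/β²)(e^{cs}−1)(e^{cs} log(1+β/(αe^{cs}−β)) − β/α)`, one has
`(1 − L(s)) e^{cs} → 1 − 2β/(3α)` as `s → ∞`. -/
theorem subcritical_tail_asymptotic (α β : ℝ) (hβ : 0 < β) (hβα : β < α) :
    Tendsto (fun s : ℝ =>
        (1 - (2 * α ^ 2 / β ^ 2) * (Real.exp ((α - β) * s) - 1) *
            (Real.exp ((α - β) * s) *
                Real.log (1 + β / (α * Real.exp ((α - β) * s) - β)) - β / α)) *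
          Real.exp ((α - β) * s))
      atTop (nhds (1 - 2 * β / (3 * α))) := by
  have hα : 0 < α := hβ.trans hβα
  have hc : 0 < α - β := sub_pos.2 hβα
  set y : ℝ → ℝ := fun s => β / (α * Real.exp ((α - β) * s)) with hydef
  set Q : ℝ → ℝ := fun s =>
    (-(Real.log (1 - y s)) - y s - (y s) ^ 2 / 2) / (y s) ^ 3 with hQdef
  -- exp((α-β)s) → ∞
  have hexp : Tendsto (fun s : ℝ => Real.exp ((α - β) * s)) atTop atTop :=
    Real.tendsto_exp_atTop.comp (tendsto_id.const_mul_atTop hc)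
  -- y → 0
  have hy0 : Tendsto y atTop (nhds 0) :=
    tendsto_const_nhds.div_atTop (hexp.const_mul_atTop hα)
  -- eventually exp ≥ 1, so 0 < y s and y s < 1/2 eventually
  have hyevent : ∀ᶠ s in atTop, 0 < y s ∧ y s < 1 ∧ 1 ≤ Real.exp ((α - β) * s) := by
    have h1 : ∀ᶠ s in atTop, (2 : ℝ) * β / α ≤ Real.exp ((α - β) * s) :=
      hexp.eventually_ge_atTop _
    have h2 : ∀ᶠ s in atTop, (1 : ℝ) ≤ Real.exp ((α - β) * s) :=
      hexp.eventually_ge_atTop _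
    filter_upwards [h1, h2] with s hs1 hs2
    have hex : (0:ℝ) < Real.exp ((α - β) * s) := Real.exp_pos _
    refine ⟨div_pos hβ (by positivity), ?_, hs2⟩
    rw [hydef]
    rw [div_lt_one (by positivity)]
    nlinarith
  -- Q → 1/3
  have hQlim : Tendsto Q atTop (nhds (1 / 3)) := by
    have hsub : Tendsto (fun s => Q s - 1 / 3) atTop (nhds 0) := by
      apply squeeze_zero_norm' (a := fun s => y s / (1 - y s))
      · filter_upwards [hyevent] with s hs
        simpa [Real.norm_eq_abs] using Q_bound (y s) hs.1 hs.2.1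
      · have : Tendsto (fun s => y s / (1 - y s)) atTop (nhds (0 / (1 - 0))) :=
          hy0.div (tendsto_const_nhds.sub hy0) (by norm_num)
        simpa using this
    have := hsub.add (tendsto_const_nhds (x := (1:ℝ)/3))
    simpa using this
  -- main combination
  have hmain : Tendsto (fun s => 1 - (2 * β / α) * Q s + 2 * y s * Q s) atTop
      (nhds (1 - (2 * β / α) * (1 / 3) + 2 * 0 * (1 / 3))) := by
    exact (tendsto_const_nhds.sub ((tendsto_const_nhds).mul hQlim)).add
      (((tendsto_const_nhds).mul hy0).mul hQlim |>.congr (by intro s; ring) |>.mono_left le_rfl)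
  have hval : 1 - (2 * β / α) * (1 / 3) + 2 * 0 * (1 / 3) = 1 - 2 * β / (3 * α) := by
    field_simp; ring
  rw [hval] at hmain
  refine hmain.congr' ?_
  filter_upwards [hyevent] with s hs
  exact (tail_algebraic_identity α β (Real.exp ((α - β) * s)) hβ hβα hs.2.2).symm
end

section
/- For every s ∈ (0,1), ∫₀^∞ (1/2)·e^{−x/2} · ( ∫₀^x (2(x−y)/x²) · e^{−y·(1/(2(1−s)) − 1/2)} dy ) dx = (2(s−1)/s²)·(log(1−s) + s). -/
open MeasureTheory Real

private lemma aux_poly_exp (x c : ℝ) (hc : c ≠ 0) :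
    ∫ y in (0:ℝ)..x, (x - y) * Real.exp (-y * c)
      = Real.exp (-x * c) / c ^ 2 + x / c - 1 / c ^ 2 := by
  have hderiv : ∀ y ∈ Set.uIcc (0:ℝ) x,
      HasDerivAt (fun y => ((y - x) / c + 1 / c ^ 2) * Real.exp (-y * c))
        ((x - y) * Real.exp (-y * c)) y := by
    intro y _
    have h1 : HasDerivAt (fun y : ℝ => (y - x) / c + 1 / c ^ 2) (1 / c) y := by
      have := (((hasDerivAt_id y).sub_const x).div_const c).add_const (1 / c ^ 2)
      simpa [one_div] using this
    have h2 : HasDerivAt (fun y : ℝ => Real.exp (-y * c)) (Real.exp (-y * c) * (-1 * c)) y := by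
      exact (((hasDerivAt_id y).neg).mul_const c).exp
    have := h1.mul h2
    refine this.congr_deriv ?_
    field_simp
    ring
  have hint : IntervalIntegrable (fun y => (x - y) * Real.exp (-y * c)) volume 0 x := by
    apply Continuous.intervalIntegrable
    fun_prop
  rw [intervalIntegral.integral_eq_sub_of_hasDerivAt hderiv hint]
  simp
  field_simp
  ring

private lemma aux_exp_Ioi (c : ℝ) (hc : 0 < c) :
    ∫ x in Set.Ioi (0:ℝ), Real.exp (-(c * x)) = 1 / c := by
  have h := integral_Ioi_of_hasDerivAt_of_tendsto
    (f := fun x : ℝ => -Real.exp (-(c * x)) / c)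
    (f' := fun x : ℝ => Real.exp (-(c * x))) (a := 0) (m := 0) ?_ ?_ ?_ ?_
  · rw [h]; field_simp; simp
  · exact Continuous.continuousWithinAt (by fun_prop)
  · intro x _
    have h2 : HasDerivAt (fun x : ℝ => Real.exp (-(c * x))) (Real.exp (-(c * x)) * (-c)) x := by
      have : HasDerivAt (fun x : ℝ => -(c * x)) (-c) x := by
        exact (((hasDerivAt_id' x).const_mul c).neg).congr_deriv (by ring)
      exact this.exp
    have := (h2.neg).div_const c
    refine this.congr_deriv ?_
    field_simp
  · have := exp_neg_integrableOn_Ioi 0 hc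
    simpa [neg_mul] using this
  · have h1 : Filter.Tendsto (fun x : ℝ => Real.exp (-(c * x))) Filter.atTop (nhds 0) := by
      apply Real.tendsto_exp_neg_atTop_nhds_zero.comp
      exact Filter.Tendsto.const_mul_atTop hc Filter.tendsto_id
    have := (h1.neg).div_const c
    simpa using this

/-- The Brownian-excursion computation of the critical coalescence-time distribution:
for `s ∈ (0,1)`,
`∫₀^∞ ½e^{−x/2} (∫₀^x (2(x−y)/x²) e^{−y(1/(2(1−s)) − 1/2)} dy) dx
  = (2(s−1)/s²)(log(1−s)+s)`. -/
theorem excursion_coalescent_integral (s : ℝ) (hs : s ∈ Set.Ioo (0 : ℝ) 1) :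
    ∫ x in Set.Ioi (0 : ℝ),
        (1 / 2) * Real.exp (-x / 2) *
          ∫ y in (0 : ℝ)..x,
            (2 * (x - y) / x ^ 2) * Real.exp (-y * (1 / (2 * (1 - s)) - 1 / 2))
      = 2 * (s - 1) / s ^ 2 * (Real.log (1 - s) + s) := by
  obtain ⟨hs0, hs1⟩ := hs
  have h1s : (0:ℝ) < 1 - s := by linarith
  set a : ℝ := s / (2 * (1 - s)) with ha_def
  have ha : 0 < a := by positivity
  have hcoef : 1 / (2 * (1 - s)) - 1 / 2 = a := by
    rw [ha_def]; field_simp; ring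
  clear_value a
  -- Step A: rewrite the integrand as (1/a²) times a t-integral
  have key : ∫ x in Set.Ioi (0:ℝ),
        (1 / 2) * Real.exp (-x / 2) *
          ∫ y in (0 : ℝ)..x,
            (2 * (x - y) / x ^ 2) * Real.exp (-y * (1 / (2 * (1 - s)) - 1 / 2))
      = ∫ x in Set.Ioi (0:ℝ),
          (1 / a ^ 2) * ∫ t in Set.Ioc (0:ℝ) a, (a - t) * Real.exp (-(1/2 + t) * x) := by
    apply setIntegral_congr_fun measurableSet_Ioi
    intro x hx
    beta_reduce
    have hx0 : (0:ℝ) < x := hx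
    rw [hcoef]
    have hinner : (∫ y in (0 : ℝ)..x, (2 * (x - y) / x ^ 2) * Real.exp (-y * a))
        = (2 / x ^ 2) * (Real.exp (-x * a) / a ^ 2 + x / a - 1 / a ^ 2) := by
      have : ∀ y : ℝ, (2 * (x - y) / x ^ 2) * Real.exp (-y * a)
          = (2 / x ^ 2) * ((x - y) * Real.exp (-y * a)) := by intro y; ring
      simp_rw [this]
      rw [intervalIntegral.integral_const_mul, aux_poly_exp x a ha.ne']
    have houter : (∫ t in Set.Ioc (0:ℝ) a, (a - t) * Real.exp (-(1/2 + t) * x))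
        = Real.exp (-x / 2) * (Real.exp (-a * x) / x ^ 2 + a / x - 1 / x ^ 2) := by
      rw [← intervalIntegral.integral_of_le ha.le]
      have : ∀ t : ℝ, (a - t) * Real.exp (-(1/2 + t) * x)
          = Real.exp (-x / 2) * ((a - t) * Real.exp (-t * x)) := by
        intro t
        rw [show -(1/2 + t) * x = (-x / 2) + (-t * x) by ring, Real.exp_add]
        ring
      simp_rw [this]
      rw [intervalIntegral.integral_const_mul, aux_poly_exp a x hx0.ne']
    rw [hinner, houter]
    rw [show -a * x = -x * a by ring]
    field_simp
  rw [key, integral_const_mul]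
  -- Step B: Fubini swap
  have hswap : (∫ x in Set.Ioi (0:ℝ), ∫ t in Set.Ioc (0:ℝ) a, (a - t) * Real.exp (-(1/2 + t) * x))
      = ∫ t in Set.Ioc (0:ℝ) a, ∫ x in Set.Ioi (0:ℝ), (a - t) * Real.exp (-(1/2 + t) * x) := by
    apply MeasureTheory.integral_integral_swap
    have hmeas : AEStronglyMeasurable
        (Function.uncurry fun x t => (a - t) * Real.exp (-(1/2 + t) * x))
        ((volume.restrict (Set.Ioi (0:ℝ))).prod (volume.restrict (Set.Ioc (0:ℝ) a))) := by
      apply Continuous.aestronglyMeasurable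
      fun_prop
    apply Integrable.mono' (g := fun z : ℝ × ℝ => a * Real.exp (-(1/2 * z.1))) ?_ hmeas
    · rw [Measure.prod_restrict]
      filter_upwards [ae_restrict_mem (measurableSet_Ioi.prod measurableSet_Ioc)] with z hz
      obtain ⟨hz1, hz2⟩ := hz
      have hx0 : (0:ℝ) < z.1 := hz1
      have ht0 : (0:ℝ) < z.2 := hz2.1
      have hta : z.2 ≤ a := hz2.2
      rw [Function.uncurry, Real.norm_eq_abs, abs_mul, abs_of_nonneg (by linarith : (0:ℝ) ≤ a - z.2),
        abs_of_pos (Real.exp_pos _)]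
      have h1 : a - z.2 ≤ a := by linarith
      have h2 : Real.exp (-(1/2 + z.2) * z.1) ≤ Real.exp (-(1/2 * z.1)) := by
        apply Real.exp_le_exp.2
        nlinarith
      have h3 : (0:ℝ) ≤ a - z.2 := by linarith
      nlinarith [Real.exp_pos (-(1/2 * z.1)), Real.exp_pos (-(1/2 + z.2) * z.1)]
    · have hf : Integrable (fun x : ℝ => a * Real.exp (-(1/2 : ℝ) * x))
          (volume.restrict (Set.Ioi (0:ℝ))) :=
        ((exp_neg_integrableOn_Ioi 0 (by norm_num : (0:ℝ) < 1/2))).const_mul a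
      have hg : Integrable (fun _ : ℝ => (1:ℝ)) (volume.restrict (Set.Ioc (0:ℝ) a)) :=
        integrable_const 1
      have := hf.mul_prod hg
      simpa [neg_mul, mul_comm] using this
  rw [hswap]
  -- Step C: compute the inner x-integral
  have hin : (∫ t in Set.Ioc (0:ℝ) a, ∫ x in Set.Ioi (0:ℝ), (a - t) * Real.exp (-(1/2 + t) * x))
      = ∫ t in Set.Ioc (0:ℝ) a, (a - t) * (1 / (1/2 + t)) := by
    apply setIntegral_congr_fun measurableSet_Ioc
    intro t ht
    have ht0 : (0:ℝ) < 1/2 + t := by have := ht.1; linarith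
    beta_reduce
    rw [integral_const_mul]
    congr 1
    rw [← aux_exp_Ioi (1/2 + t) ht0]
    congr 1
    ext x
    rw [neg_mul]
  rw [hin]
  -- Step D: compute the remaining t-integral
  have hL : (∫ t in Set.Ioc (0:ℝ) a, (a - t) * (1 / (1/2 + t)))
      = (a + 1/2) * (Real.log (1/2 + a) - Real.log (1/2)) - a := by
    rw [← intervalIntegral.integral_of_le ha.le]
    have hderiv : ∀ t ∈ Set.uIcc (0:ℝ) a,
        HasDerivAt (fun t => (a + 1/2) * Real.log (1/2 + t) - t)
          ((a - t) * (1 / (1/2 + t))) t := by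
      intro t ht
      rw [Set.uIcc_of_le ha.le] at ht
      have ht0 : (0:ℝ) < 1/2 + t := by have := ht.1; linarith
      have h1 : HasDerivAt (fun t : ℝ => Real.log (1/2 + t)) (1 / (1/2 + t)) t := by
        have := ((hasDerivAt_id t).const_add (1/2 : ℝ)).log ht0.ne'
        simpa using this
      have := (h1.const_mul (a + 1/2)).sub (hasDerivAt_id t)
      refine this.congr_deriv ?_
      have hne : (1:ℝ) + t * 2 ≠ 0 := by nlinarith
      field_simp [ht0.ne', hne]
      linear_combination mul_inv_cancel₀ hne
    have hint : IntervalIntegrable (fun t => (a - t) * (1 / (1/2 + t))) volume 0 a := by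
      apply ContinuousOn.intervalIntegrable
      apply ContinuousOn.mul (by fun_prop)
      apply ContinuousOn.div continuousOn_const (by fun_prop)
      intro t ht
      rw [Set.uIcc_of_le ha.le] at ht
      have := ht.1
      positivity
    rw [intervalIntegral.integral_eq_sub_of_hasDerivAt hderiv hint]
    simp
    ring
  rw [hL]
  -- Step E: final algebra
  have h2a : 1/2 + a = 1 / (2 * (1 - s)) := by linarith [hcoef]
  have hlog1 : Real.log (1 / (2 * (1 - s))) = -(Real.log 2 + Real.log (1 - s)) := by
    rw [one_div, Real.log_inv, Real.log_mul (by norm_num) h1s.ne']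
  have hlog2 : Real.log ((1:ℝ)/2) = -Real.log 2 := by
    rw [one_div, Real.log_inv]
  rw [h2a, hlog1, hlog2, ha_def]
  have hs' : s ≠ 0 := hs0.ne'
  have h1s' : (1:ℝ) - s ≠ 0 := h1s.ne'
  field_simp
  ring
end

section
/- Let n ≥ 1 and let (Ω, F, P) be a probability space. Let X₁, …, X_n be real random variables with values in [0,1] satisfying X₁ ≤ X₂ ≤ … ≤ X_n pointwise, and suppose there is a symmetric integrable function f : ℝⁿ → ℝ (invariant under every permutation of its n arguments) such that for all real numbers a₁ < b₁ ≤ a₂ < b₂ ≤ … ≤ a_n < b_n in [0,1], P(X_i ∈ (a_i, b_i] for all i = 1,…,n) = ∫_{a₁}^{b₁} ⋯ ∫_{a_n}^{b_n} f(x₁,…,x_n) dx_n ⋯ dx₁. Let σ be a random permutation of {1,…,n}, uniformly distributed on the symmetric group and independent of (X₁,…,X_n), and set Y_i = X_{σ(i)}. Then for all y₁, …, y_n ∈ [0,1], P( Y_i > y_i for all i, and Y_i ≠ Y_j for all i ≠ j ) = (1/n!) · ∫_{y₁}^{1} ⋯ ∫_{y_n}^{1} f(x₁,…,x_n) dx_n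 ⋯ dx₁. -/
open MeasureTheory ProbabilityTheory

/-- Permutations of `Fin n` carry the discrete σ-algebra. -/
instance permMeasurableSpace (n : ℕ) : MeasurableSpace (Equiv.Perm (Fin n)) := ⊤

namespace UnorderAux
open Set
variable {n : ℕ}

def incBox (a b : Fin n → ℝ) : Set (Fin n → ℝ) :=
  Set.univ.pi fun i => Set.Ioc (a i) (b i)

def goodPair (a b : Fin n → ℝ) : Prop :=
  (∀ i, 0 ≤ a i) ∧ (∀ i, b i ≤ 1) ∧ (∀ i, a i < b i) ∧
    ∀ i j : Fin n, (i : ℕ) + 1 = (j : ℕ) → b i ≤ a j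

def upSet (c : Fin n → ℝ) : Set (Fin n → ℝ) :=
  {x | StrictMono x ∧ ∀ i, x i ∈ Set.Ioc (c i) 1}

lemma strictMono_of_chain {x : Fin n → ℝ}
    (h : ∀ i j : Fin n, (i : ℕ) + 1 = (j : ℕ) → x i < x j) : StrictMono x := by
  have key : ∀ m : ℕ, ∀ hm : m < n, ∀ k : Fin n, (k : ℕ) < m → x k < x ⟨m, hm⟩ := by
    intro m
    induction m with
    | zero => intro _ k hk; omega
    | succ p ih =>
        intro hm k hk
        have hp : p < n := by omega
        have hstep : x ⟨p, hp⟩ < x ⟨p + 1, hm⟩ := h ⟨p, hp⟩ ⟨p + 1, hm⟩ rfl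
        rcases Nat.lt_or_ge (k : ℕ) p with h1 | h1
        · exact (ih hp k h1).trans hstep
        · have hkp : (k : ℕ) = p := by omega
          have : k = ⟨p, hp⟩ := Fin.ext hkp
          rw [this]; exact hstep
  intro i j hij
  have := key (j : ℕ) j.isLt i hij
  simpa using this

lemma mem_incBox {a b x : Fin n → ℝ} :
    x ∈ incBox a b ↔ ∀ i, x i ∈ Set.Ioc (a i) (b i) := by
  simp [incBox]

lemma incBox_subset_upSet {a b c : Fin n → ℝ} (h : goodPair a b)
    (hca : ∀ i, c i ≤ a i) : incBox a b ⊆ upSet c := by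
  obtain ⟨h0, h1, hab, hchain⟩ := h
  intro x hx
  rw [mem_incBox] at hx
  constructor
  · apply strictMono_of_chain
    intro i j hij
    exact ((hx i).2.trans (hchain i j hij)).trans_lt (hx j).1
  · intro i
    exact ⟨(hca i).trans_lt (hx i).1, (hx i).2.trans (h1 i)⟩

lemma measurableSet_strictMono :
    MeasurableSet {x : Fin n → ℝ | StrictMono x} := by
  have : {x : Fin n → ℝ | StrictMono x}
      = ⋂ (i : Fin n) , ⋂ (j : Fin n), ⋂ (_ : i < j), {x | x i < x j} := by
    ext x
    simp only [Set.mem_setOf_eq, Set.mem_iInter]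
    exact ⟨fun h i j hij => h hij, fun h i j hij => h i j hij⟩
  rw [this]
  exact MeasurableSet.iInter fun i => MeasurableSet.iInter fun j =>
    MeasurableSet.iInter fun _ =>
      measurableSet_lt (measurable_pi_apply i) (measurable_pi_apply j)

lemma measurableSet_upSet (c : Fin n → ℝ) : MeasurableSet (upSet c) := by
  have : upSet c = {x : Fin n → ℝ | StrictMono x}
      ∩ ⋂ i, (fun x : Fin n → ℝ => x i) ⁻¹' Set.Ioc (c i) 1 := by
    ext x; simp [upSet]
  rw [this]
  exact measurableSet_strictMono.inter <| MeasurableSet.iInter fun i =>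
    measurableSet_Ioc.preimage (measurable_pi_apply i)

lemma measurableSet_incBox (a b : Fin n → ℝ) : MeasurableSet (incBox a b) :=
  MeasurableSet.univ_pi fun _ => measurableSet_Ioc


/-- the π-system of increasing boxes, together with the complement of the
"strictly increasing octant" `upSet 0`. -/
def boxSys (n : ℕ) : Set (Set (Fin n → ℝ)) :=
  {s | ∃ a b : Fin n → ℝ, goodPair a b ∧ s = incBox a b}

lemma isPiSystem_boxSys :
    IsPiSystem (boxSys n ∪ {(upSet fun _ => (0 : ℝ))ᶜ}) := by
  rintro s (⟨a, b, ⟨ha0, hb1, hab, hchain⟩, rfl⟩ | hs) t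
      (⟨a', b', ⟨ha0', hb1', hab', hchain'⟩, rfl⟩ | ht) hne
  · left
    refine ⟨fun i => max (a i) (a' i), fun i => min (b i) (b' i), ⟨?_, ?_, ?_, ?_⟩, ?_⟩
    · intro i; exact le_max_of_le_left (ha0 i)
    · intro i; exact min_le_of_left_le (hb1 i)
    · intro i
      obtain ⟨x, hx⟩ := hne
      obtain ⟨hx1, hx2⟩ := hx
      rw [mem_incBox] at hx1 hx2
      have := (hx1 i); have := (hx2 i)
      simp only [Set.mem_Ioc] at *
      exact lt_of_lt_of_le (max_lt (hx1 i).1 (hx2 i).1) (le_min (hx1 i).2 (hx2 i).2)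
    · intro i j hij
      exact le_max_of_le_left <| (min_le_left _ _).trans (hchain i j hij) |>.trans (le_refl _)
    · simp only [incBox, ← Set.pi_inter_distrib, Set.Ioc_inter_Ioc]
  · -- box ∩ Oᶜ
    exfalso
    simp only [Set.mem_singleton_iff] at ht
    subst ht
    obtain ⟨x, hx1, hx2⟩ := hne
    exact hx2 (incBox_subset_upSet ⟨ha0, hb1, hab, hchain⟩ (fun i => ha0 i) hx1)
  · -- Oᶜ ∩ box
    exfalso
    simp only [Set.mem_singleton_iff] at hs
    subst hs
    obtain ⟨x, hx1, hx2⟩ := hne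
    exact hx1 (incBox_subset_upSet ⟨ha0', hb1', hab', hchain'⟩ (fun i => ha0' i) hx2)
  · -- Oᶜ ∩ Oᶜ
    right
    simp only [Set.mem_singleton_iff] at hs ht
    subst hs; subst ht
    simp


lemma exists_ratBox {c : Fin n → ℝ} (hc : ∀ i, 0 ≤ c i) {x : Fin n → ℝ}
    (hx : x ∈ upSet c) :
    ∃ a b : Fin n → ℚ, goodPair (fun i => (a i : ℝ)) (fun i => (b i : ℝ)) ∧
      (∀ i, c i ≤ (a i : ℝ)) ∧ x ∈ incBox (fun i => (a i : ℝ)) (fun i => (b i : ℝ)) := by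
  obtain ⟨hsm, hbound⟩ := hx
  have hbex : ∀ i : Fin n, ∃ q : ℚ, (x i ≤ (q : ℝ)) ∧ ((q : ℝ) ≤ 1) ∧
      ∀ h : (i : ℕ) + 1 < n, (q : ℝ) < x ⟨(i : ℕ) + 1, h⟩ := by
    intro i
    by_cases h : (i : ℕ) + 1 < n
    · obtain ⟨q, hq1, hq2⟩ :=
        exists_rat_btwn (hsm (show i < ⟨(i : ℕ) + 1, h⟩ by simp [Fin.lt_def]))
      refine ⟨q, hq1.le, hq2.le.trans (hbound _).2, fun _ => hq2⟩
    · refine ⟨1, ?_, by norm_num, fun h' => absurd h' h⟩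
      have := (hbound i).2; push_cast; linarith
  choose b hb1 hb2 hb3 using hbex
  have haex : ∀ j : Fin n, ∃ q : ℚ, (c j < (q : ℝ)) ∧ ((q : ℝ) < x j) ∧
      ∀ _ : 0 < (j : ℕ),
        ((b ⟨(j : ℕ) - 1, lt_of_le_of_lt (Nat.sub_le _ _) j.isLt⟩ : ℝ) ≤ (q : ℝ)) := by
    intro j
    by_cases h : 0 < (j : ℕ)
    · set i : Fin n := ⟨(j : ℕ) - 1, lt_of_le_of_lt (Nat.sub_le _ _) j.isLt⟩ with hi
      have hin : (i : ℕ) + 1 < n := by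
        simp only [hi]; omega
      have hij : (⟨(i : ℕ) + 1, hin⟩ : Fin n) = j := by
        apply Fin.ext; simp only [hi]; omega
      have hbij : ((b i : ℝ)) < x j := by
        have := hb3 i hin; rwa [hij] at this
      have hlt : max (c j) ((b i : ℝ)) < x j := max_lt (hbound j).1 hbij
      obtain ⟨q, hq1, hq2⟩ := exists_rat_btwn hlt
      exact ⟨q, (le_max_left _ _).trans_lt hq1, hq2,
        fun _ => ((le_max_right _ _).trans hq1.le)⟩
    · obtain ⟨q, hq1, hq2⟩ := exists_rat_btwn (hbound j).1
      exact ⟨q, hq1, hq2, fun h' => absurd h' h⟩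
  choose a ha1 ha2 ha3 using haex
  refine ⟨a, b, ⟨fun i => (hc i).trans (ha1 i).le, fun i => hb2 i,
    fun i => (ha2 i).trans_le (hb1 i), ?_⟩, fun i => (ha1 i).le, ?_⟩
  · intro i j hij
    have h0j : 0 < (j : ℕ) := by omega
    have hji : (⟨(j : ℕ) - 1, lt_of_le_of_lt (Nat.sub_le _ _) j.isLt⟩ : Fin n) = i := by
      apply Fin.ext; simp; omega
    have := ha3 j h0j
    rwa [hji] at this
  · rw [mem_incBox]
    exact fun i => ⟨ha2 i, hb1 i⟩


def sysG (n : ℕ) : MeasurableSpace (Fin n → ℝ) :=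
  MeasurableSpace.generateFrom (boxSys n ∪ {(upSet fun _ => (0 : ℝ))ᶜ})

lemma sysG_le : sysG n ≤ (inferInstance : MeasurableSpace (Fin n → ℝ)) := by
  apply MeasurableSpace.generateFrom_le
  rintro s (⟨a, b, _, rfl⟩ | hs)
  · exact measurableSet_incBox a b
  · simp only [Set.mem_singleton_iff] at hs; subst hs
    exact (measurableSet_upSet _).compl

def ratIncBox (p : (Fin n → ℚ) × (Fin n → ℚ)) : Set (Fin n → ℝ) :=
  incBox (fun i => (p.1 i : ℝ)) (fun i => (p.2 i : ℝ))

lemma upSet_eq_iUnion {c : Fin n → ℝ} (hc : ∀ i, 0 ≤ c i) :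
    upSet c = ⋃ p ∈ {p : (Fin n → ℚ) × (Fin n → ℚ) |
      goodPair (fun i => (p.1 i : ℝ)) (fun i => (p.2 i : ℝ)) ∧ ∀ i, c i ≤ (p.1 i : ℝ)},
      ratIncBox p := by
  ext x
  constructor
  · intro hx
    obtain ⟨a, b, hgood, hca, hmem⟩ := exists_ratBox hc hx
    exact Set.mem_biUnion (show (a, b) ∈ _ from ⟨hgood, hca⟩) (show x ∈ ratIncBox (a, b) from hmem)
  · simp only [Set.mem_iUnion]
    rintro ⟨p, ⟨hgood, hca⟩, hmem⟩
    exact incBox_subset_upSet hgood hca hmem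

lemma measurableSet_sysG_upSet {c : Fin n → ℝ} (hc : ∀ i, 0 ≤ c i) :
    MeasurableSet[sysG n] (upSet c) := by
  rw [upSet_eq_iUnion hc]
  refine MeasurableSet.biUnion (Set.to_countable _) ?_
  rintro p ⟨hgood, _⟩
  exact MeasurableSpace.measurableSet_generateFrom (Or.inl ⟨_, _, hgood, rfl⟩)

lemma exists_cover (n : ℕ) : ∃ B : ℕ → Set (Fin n → ℝ),
    (⋃ i, B i) = Set.univ ∧ ∀ i, B i ∈ boxSys n ∪ {(upSet fun _ => (0 : ℝ))ᶜ} := by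
  classical
  obtain ⟨g, hg⟩ := exists_surjective_nat ((Fin n → ℚ) × (Fin n → ℚ))
  refine ⟨fun k => match k with
    | 0 => (upSet fun _ => (0 : ℝ))ᶜ
    | m + 1 =>
        if goodPair (fun i => ((g m).1 i : ℝ)) (fun i => ((g m).2 i : ℝ)) then ratIncBox (g m)
        else (upSet fun _ => (0 : ℝ))ᶜ, ?_, ?_⟩
  · apply Set.eq_univ_of_forall
    intro x
    by_cases hx : x ∈ upSet (fun _ : Fin n => (0 : ℝ))
    · obtain ⟨a, b, hgood, _, hmem⟩ := exists_ratBox (fun i => le_refl (0 : ℝ)) hx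
      obtain ⟨m, hm⟩ := hg (a, b)
      refine Set.mem_iUnion.2 ⟨m + 1, ?_⟩
      simp only [hm, if_pos hgood]
      exact hmem
    · exact Set.mem_iUnion.2 ⟨0, hx⟩
  · intro k
    match k with
    | 0 => exact Or.inr rfl
    | m + 1 =>
        by_cases hgood : goodPair (fun i => ((g m).1 i : ℝ)) (fun i => ((g m).2 i : ℝ))
        · simp only [if_pos hgood]
          exact Or.inl ⟨_, _, hgood, rfl⟩
        · simp only [if_neg hgood]
          exact Or.inr rfl


lemma upSet_subset_upSet {c c' : Fin n → ℝ} (h : ∀ i, c' i ≤ c i) :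
    upSet c ⊆ upSet c' := fun x hx =>
  ⟨hx.1, fun i => ⟨(h i).trans_lt (hx.2 i).1, (hx.2 i).2⟩⟩

lemma measure_upSet_eq {μ : Measure (Fin n → ℝ)} [IsFiniteMeasure μ]
    {f : (Fin n → ℝ) → ℝ}
    (hfint : Integrable f (Measure.pi fun _ : Fin n => volume))
    (hdens : ∀ a b : Fin n → ℝ, goodPair a b →
      (μ (incBox a b)).toReal
        = ∫ x in incBox a b, f x ∂(Measure.pi fun _ : Fin n => volume))
    {c : Fin n → ℝ} (hc : ∀ i, 0 ≤ c i) :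
    (μ (upSet c)).toReal = ∫ x in upSet c, f x ∂(Measure.pi fun _ : Fin n => volume) := by
  classical
  set Leb := Measure.pi fun _ : Fin n => (volume : Measure ℝ) with hLeb
  set O := upSet (fun _ : Fin n => (0 : ℝ)) with hOdef
  set fp : (Fin n → ℝ) → ENNReal := fun x => ENNReal.ofReal (f x) with hfp
  set fm : (Fin n → ℝ) → ENNReal := fun x => ENNReal.ofReal (-f x) with hfm
  have hftop : ∀ g : (Fin n → ℝ) → ℝ, Integrable g Leb →
      ∫⁻ x, ENNReal.ofReal (g x) ∂Leb < ⊤ := by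
    intro g hg
    calc ∫⁻ x, ENNReal.ofReal (g x) ∂Leb ≤ ∫⁻ x, ‖g x‖ₑ ∂Leb :=
          lintegral_mono fun x => Real.ofReal_le_enorm _
      _ < ⊤ := hg.2
  have hfptop : ∫⁻ x, fp x ∂Leb < ⊤ := hftop f hfint
  have hfmtop : ∫⁻ x, fm x ∂Leb < ⊤ := hftop (fun x => -f x) hfint.neg
  have hOmeas : MeasurableSet O := measurableSet_upSet _
  set ν₁ : Measure (Fin n → ℝ) := μ.restrict O + (Leb.withDensity fm).restrict O with hν₁
  set ν₂ : Measure (Fin n → ℝ) := (Leb.withDensity fp).restrict O with hν₂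
  -- values on Borel sets
  have hν₁app : ∀ s : Set (Fin n → ℝ), MeasurableSet s → s ⊆ O →
      ν₁ s = μ s + ∫⁻ x in s, fm x ∂Leb := by
    intro s hs hsO
    rw [hν₁]
    simp only [Measure.add_apply, Measure.restrict_apply hs,
      Set.inter_eq_self_of_subset_left hsO, withDensity_apply _ hs]
  have hν₂app : ∀ s : Set (Fin n → ℝ), MeasurableSet s → s ⊆ O →
      ν₂ s = ∫⁻ x in s, fp x ∂Leb := by
    intro s hs hsO
    rw [hν₂, Measure.restrict_apply hs, Set.inter_eq_self_of_subset_left hsO,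
      withDensity_apply _ hs]
  have hν₁fin : ν₁ Set.univ ≠ ⊤ := by
    rw [hν₁]
    simp only [Measure.add_apply]
    rw [Measure.restrict_apply_univ, Measure.restrict_apply_univ, withDensity_apply _ hOmeas]
    exact (ENNReal.add_lt_top.2 ⟨measure_lt_top _ _,
      (setLIntegral_le_lintegral _ _).trans_lt hfmtop⟩).ne
  -- the key: ν₁ and ν₂ agree on sets measurable for `sysG n`
  have hagree : ∀ s : Set (Fin n → ℝ), MeasurableSet[sysG n] s → ν₁ s = ν₂ s := by
    have key : ∀ s, s ∈ boxSys n ∪ {Oᶜ} → ν₁ s = ν₂ s := by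
      rintro s (⟨a, b, hgood, rfl⟩ | hs)
      · have hsub : incBox a b ⊆ O := incBox_subset_upSet hgood (fun i => hgood.1 i)
        have hbm := measurableSet_incBox a b
        rw [hν₁app _ hbm hsub, hν₂app _ hbm hsub]
        have hfin1 : μ (incBox a b) ≠ ⊤ := measure_ne_top _ _
        have hfin2 : ∫⁻ x in incBox a b, fm x ∂Leb ≠ ⊤ :=
          ((setLIntegral_le_lintegral _ _).trans_lt hfmtop).ne
        have hfin3 : ∫⁻ x in incBox a b, fp x ∂Leb ≠ ⊤ :=
          ((setLIntegral_le_lintegral _ _).trans_lt hfptop).ne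
        rw [← ENNReal.toReal_eq_toReal_iff' (by simp [ENNReal.add_ne_top, hfin1, hfin2]) hfin3,
          ENNReal.toReal_add hfin1 hfin2]
        have hint : ∫ x in incBox a b, f x ∂Leb
            = (∫⁻ x in incBox a b, fp x ∂Leb).toReal
              - (∫⁻ x in incBox a b, fm x ∂Leb).toReal :=
          integral_eq_lintegral_pos_part_sub_lintegral_neg_part hfint.restrict
        have := hdens a b hgood
        rw [this, hint]
        ring
      · simp only [Set.mem_singleton_iff] at hs; subst hs
        rw [hν₁, hν₂]
        simp [Measure.restrict_apply hOmeas.compl]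
    intro s hs
    obtain ⟨B, hBunion, hBmem⟩ := exists_cover n
    have hext : ν₁.trim sysG_le = ν₂.trim sysG_le := by
      refine Measure.ext_of_generateFrom_of_iUnion (boxSys n ∪ {Oᶜ}) B rfl
        isPiSystem_boxSys hBunion hBmem ?_ ?_
      · intro i
        have hBG : MeasurableSet[sysG n] (B i) :=
          MeasurableSpace.measurableSet_generateFrom (hBmem i)
        rw [trim_measurableSet_eq sysG_le hBG]
        have : ν₁ (B i) ≤ ν₁ Set.univ := measure_mono (Set.subset_univ _)
        exact (this.trans_lt (lt_of_le_of_ne le_top hν₁fin)).ne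
      · intro t ht
        have htG : MeasurableSet[sysG n] t :=
          MeasurableSpace.measurableSet_generateFrom ht
        rw [trim_measurableSet_eq sysG_le htG, trim_measurableSet_eq sysG_le htG]
        exact key t ht
    calc ν₁ s = ν₁.trim sysG_le s := (trim_measurableSet_eq sysG_le hs).symm
      _ = ν₂.trim sysG_le s := by rw [hext]
      _ = ν₂ s := trim_measurableSet_eq sysG_le hs
  -- now evaluate at `upSet c`
  have hWG : MeasurableSet[sysG n] (upSet c) := measurableSet_sysG_upSet hc
  have hWm : MeasurableSet (upSet c) := measurableSet_upSet c
  have hWsub : upSet c ⊆ O := upSet_subset_upSet hc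
  have h1 := hagree _ hWG
  rw [hν₁app _ hWm hWsub, hν₂app _ hWm hWsub] at h1
  have hfin1 : μ (upSet c) ≠ ⊤ := measure_ne_top _ _
  have hfin2 : ∫⁻ x in upSet c, fm x ∂Leb ≠ ⊤ :=
    ((setLIntegral_le_lintegral _ _).trans_lt hfmtop).ne
  have hfin3 : ∫⁻ x in upSet c, fp x ∂Leb ≠ ⊤ :=
    ((setLIntegral_le_lintegral _ _).trans_lt hfptop).ne
  have hint : ∫ x in upSet c, f x ∂Leb
      = (∫⁻ x in upSet c, fp x ∂Leb).toReal - (∫⁻ x in upSet c, fm x ∂Leb).toReal :=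
    integral_eq_lintegral_pos_part_sub_lintegral_neg_part hfint.restrict
  have h2 := congrArg ENNReal.toReal h1
  rw [ENNReal.toReal_add hfin1 hfin2] at h2
  rw [hint]
  linarith


lemma diag_null {i j : Fin n} (hij : i ≠ j) :
    (Measure.pi fun _ : Fin n => (volume : Measure ℝ)) {x | x i = x j} = 0 := by
  classical
  set p : Fin n → Prop := fun k => k ≠ i with hp
  have hpj : p j := fun h => hij h.symm
  have hnpi : ¬ p i := fun h => h rfl
  have hmp := measurePreserving_piEquivPiSubtypeProd
    (fun _ : Fin n => (volume : Measure ℝ)) p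
  set e := MeasurableEquiv.piEquivPiSubtypeProd (fun _ : Fin n => ℝ) p with he
  set T : Set ((∀ _ : Subtype p, ℝ) × (∀ _ : {k // ¬ p k}, ℝ)) :=
    {z | z.2 ⟨i, hnpi⟩ = z.1 ⟨j, hpj⟩} with hT
  have hTmeas : MeasurableSet T := by
    apply measurableSet_eq_fun
    · exact (measurable_pi_apply _).comp measurable_snd
    · exact (measurable_pi_apply _).comp measurable_fst
  have hpre : {x : Fin n → ℝ | x i = x j} = e ⁻¹' T := by
    ext x
    simp only [Set.mem_preimage, he, MeasurableEquiv.piEquivPiSubtypeProd_apply, hT,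
      Set.mem_setOf_eq]
  rw [hpre, hmp.measure_preimage hTmeas.nullMeasurableSet]
  haveI : Nonempty {k // ¬ p k} := ⟨⟨i, hnpi⟩⟩
  rw [Measure.prod_apply hTmeas]
  have : ∀ u : ∀ _ : Subtype p, ℝ,
      (Measure.pi fun _ : {k // ¬ p k} => (volume : Measure ℝ))
        (Prod.mk u ⁻¹' T) = 0 := by
    intro u
    have : Prod.mk u ⁻¹' T = {v : ∀ _ : {k // ¬ p k}, ℝ | v ⟨i, hnpi⟩ = u ⟨j, hpj⟩} := rfl
    rw [this]
    exact Measure.pi_hyperplane _ _ _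
  simp only [this, lintegral_zero]

lemma exists_sort {x : Fin n → ℝ} (hinj : Function.Injective x) :
    ∃ τ : Equiv.Perm (Fin n), StrictMono (x ∘ τ) :=
  ⟨Tuple.sort x, (Tuple.monotone_sort x).strictMono_of_injective
    (hinj.comp (Tuple.sort x).injective)⟩

lemma sort_unique {x : Fin n → ℝ} {τ₁ τ₂ : Equiv.Perm (Fin n)}
    (h1 : StrictMono (x ∘ τ₁)) (h2 : StrictMono (x ∘ τ₂)) : τ₁ = τ₂ := by
  have hcomp : x ∘ τ₁ = x ∘ τ₂ := by
    rw [Tuple.comp_sort_eq_comp_iff_monotone.2 h1.monotone,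
      Tuple.comp_sort_eq_comp_iff_monotone.2 h2.monotone]
  have hinj : Function.Injective x := by
    have h' : Function.Injective (x ∘ τ₁) := h1.injective
    intro a b hab
    have hc : (x ∘ τ₁) (τ₁.symm a) = (x ∘ τ₁) (τ₁.symm b) := by
      simpa [Function.comp] using hab
    have := h' hc
    simpa using congrArg τ₁ this
  apply Equiv.ext
  intro i
  exact hinj (congrFun hcomp i)


def sortSet (n : ℕ) (τ : Equiv.Perm (Fin n)) : Set (Fin n → ℝ) := {x | StrictMono (x ∘ τ)}

lemma measurableSet_sortSet (τ : Equiv.Perm (Fin n)) : MeasurableSet (sortSet n τ) := by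
  have h : sortSet n τ = (fun x : Fin n → ℝ => x ∘ τ) ⁻¹' {x | StrictMono x} := rfl
  rw [h]
  exact (measurable_pi_lambda _ fun j => measurable_pi_apply (τ j)) measurableSet_strictMono

lemma box_ae_eq_union (y : Fin n → ℝ) :
    (Set.univ.pi fun i => Set.Ioc (y i) 1 : Set (Fin n → ℝ))
      =ᵐ[Measure.pi fun _ : Fin n => volume]
    ⋃ τ : Equiv.Perm (Fin n), sortSet n τ ∩ Set.univ.pi fun i => Set.Ioc (y i) 1 := by
  set Box : Set (Fin n → ℝ) := Set.univ.pi fun i => Set.Ioc (y i) 1 with hBox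
  set D : Set (Fin n → ℝ) := ⋃ (i : Fin n), ⋃ (j : Fin n), ⋃ (_ : i ≠ j), {x | x i = x j}
    with hD
  have hDnull : (Measure.pi fun _ : Fin n => (volume : Measure ℝ)) D = 0 :=
    measure_iUnion_null fun i => measure_iUnion_null fun j =>
      measure_iUnion_null fun hij => diag_null hij
  rw [MeasureTheory.ae_eq_set]
  constructor
  · refine measure_mono_null ?_ hDnull
    intro x hx
    obtain ⟨hxB, hxU⟩ := hx
    by_cases hinj : Function.Injective x
    · obtain ⟨τ, hτ⟩ := exists_sort hinj
      exact absurd (Set.mem_iUnion.2 ⟨τ, (⟨hτ, hxB⟩ : x ∈ sortSet n τ ∩ Box)⟩) hxU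
    · simp only [Function.Injective, not_forall] at hinj
      obtain ⟨a, b, hab, hne⟩ := hinj
      exact Set.mem_iUnion.2 ⟨a, Set.mem_iUnion.2 ⟨b, Set.mem_iUnion.2 ⟨hne, hab⟩⟩⟩
  · have : (⋃ τ : Equiv.Perm (Fin n), sortSet n τ ∩ Box) \ Box = ∅ := by
      rw [Set.diff_eq_empty]
      exact Set.iUnion_subset fun τ => Set.inter_subset_right
    rw [this]
    exact measure_empty

lemma integral_sortSet_inter_box {f : (Fin n → ℝ) → ℝ}
    (hfsymm : ∀ (π : Equiv.Perm (Fin n)) (x : Fin n → ℝ), f (x ∘ π) = f x)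
    (y : Fin n → ℝ) (τ : Equiv.Perm (Fin n)) :
    ∫ x in sortSet n τ ∩ Set.univ.pi fun i => Set.Ioc (y i) 1, f x
        ∂(Measure.pi fun _ : Fin n => volume)
      = ∫ x in upSet (fun j => y (τ j)), f x ∂(Measure.pi fun _ : Fin n => volume) := by
  have hmp := measurePreserving_piCongrLeft (fun _ : Fin n => (volume : Measure ℝ)) τ
  set Ψ := MeasurableEquiv.piCongrLeft (fun _ : Fin n => ℝ) τ with hΨdef
  have hΨapp : ∀ z : Fin n → ℝ, Ψ z = z ∘ τ.symm := by
    intro z; funext j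
    have h1 : Ψ z (τ (τ.symm j)) = z (τ.symm j) := by
      rw [hΨdef]
      simp only [MeasurableEquiv.coe_piCongrLeft]
      exact Equiv.piCongrLeft_apply_apply (fun _ => ℝ) τ z (τ.symm j)
    simpa using h1
  have hcomp : ∀ z : Fin n → ℝ, (z ∘ τ.symm) ∘ τ = z := by
    intro z; funext k; simp
  have hpre : Ψ ⁻¹' (sortSet n τ ∩ Set.univ.pi fun i => Set.Ioc (y i) 1)
      = upSet (fun j => y (τ j)) := by
    ext z
    simp only [Set.mem_preimage, Set.mem_inter_iff, hΨapp, sortSet, Set.mem_setOf_eq,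
      Set.mem_pi, Set.mem_univ, forall_true_left, upSet]
    constructor
    · rintro ⟨h1, h2⟩
      refine ⟨by rwa [hcomp z] at h1, fun j => ?_⟩
      simpa using h2 (τ j)
    · rintro ⟨h1, h2⟩
      refine ⟨by rwa [hcomp z], fun i => ?_⟩
      simpa using h2 (τ.symm i)
  have hfcomp : (fun z => f (Ψ z)) = f := by
    funext z
    rw [hΨapp z]
    exact hfsymm τ.symm z
  calc ∫ x in sortSet n τ ∩ Set.univ.pi fun i => Set.Ioc (y i) 1, f x
        ∂(Measure.pi fun _ : Fin n => volume)
      = ∫ z in Ψ ⁻¹' (sortSet n τ ∩ Set.univ.pi fun i => Set.Ioc (y i) 1), f (Ψ z)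
          ∂(Measure.pi fun _ : Fin n => volume) :=
        (hmp.setIntegral_preimage_emb Ψ.measurableEmbedding f _).symm
    _ = ∫ z in upSet (fun j => y (τ j)), f z ∂(Measure.pi fun _ : Fin n => volume) := by
        rw [hpre, hfcomp]

lemma sum_integral_box {f : (Fin n → ℝ) → ℝ}
    (hfint : Integrable f (Measure.pi fun _ : Fin n => volume))
    (hfsymm : ∀ (π : Equiv.Perm (Fin n)) (x : Fin n → ℝ), f (x ∘ π) = f x)
    (y : Fin n → ℝ) :
    ∑ τ : Equiv.Perm (Fin n),
        ∫ x in upSet (fun j => y (τ j)), f x ∂(Measure.pi fun _ : Fin n => volume)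
      = ∫ x in Set.univ.pi fun i => Set.Ioc (y i) 1, f x
          ∂(Measure.pi fun _ : Fin n => volume) := by
  have h1 : ∀ τ : Equiv.Perm (Fin n),
      ∫ x in upSet (fun j => y (τ j)), f x ∂(Measure.pi fun _ : Fin n => volume)
        = ∫ x in sortSet n τ ∩ Set.univ.pi fun i => Set.Ioc (y i) 1, f x
            ∂(Measure.pi fun _ : Fin n => volume) :=
    fun τ => (integral_sortSet_inter_box hfsymm y τ).symm
  simp_rw [h1]
  rw [← integral_iUnion_fintype
      (fun τ => (measurableSet_sortSet τ).inter
        (MeasurableSet.univ_pi fun _ => measurableSet_Ioc))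
      ?_ (fun τ => hfint.integrableOn)]
  · exact (setIntegral_congr_set (box_ae_eq_union y)).symm
  · intro τ₁ τ₂ hne
    rw [Function.onFun, Set.disjoint_left]
    rintro x ⟨hx1, _⟩ ⟨hx2, _⟩
    exact hne (sort_unique hx1 hx2)

end UnorderAux

/-- Lemma A.4 (unordering lemma): let `X₁ ≤ ⋯ ≤ X_n` be ordered `[0,1]`-valued random
variables whose joint law on increasing boxes is given by a symmetric integrable
density `f`, and let `σ` be an independent uniform random permutation.  Setting
`Y i = X (σ i)`, for all `y₁, …, y_n ∈ [0,1]`,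
`P(Yᵢ > yᵢ ∀i, Yᵢ ≠ Y_j ∀ i ≠ j) = (1/n!) ∫_{y₁}^1 ⋯ ∫_{y_n}^1 f`. -/
theorem unordering_lemma
    {Ω : Type*} [MeasurableSpace Ω] (P : Measure Ω) [IsProbabilityMeasure P]
    (n : ℕ) (hn : 1 ≤ n)
    (X : Fin n → Ω → ℝ) (hXmeas : ∀ i, Measurable (X i))
    (hX01 : ∀ i, ∀ ω, X i ω ∈ Set.Icc (0 : ℝ) 1)
    (hmono : ∀ ω, ∀ i j : Fin n, i ≤ j → X i ω ≤ X j ω)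
    (f : (Fin n → ℝ) → ℝ)
    (hfsymm : ∀ (π : Equiv.Perm (Fin n)) (x : Fin n → ℝ), f (x ∘ π) = f x)
    (hfint : Integrable f (Measure.pi fun _ : Fin n => volume))
    (hdens : ∀ a b : Fin n → ℝ, (∀ i, 0 ≤ a i) → (∀ i, b i ≤ 1) →
      (∀ i, a i < b i) → (∀ i j : Fin n, (i : ℕ) + 1 = (j : ℕ) → b i ≤ a j) →
      (P {ω | ∀ i, X i ω ∈ Set.Ioc (a i) (b i)}).toReal
        = ∫ x in Set.univ.pi fun i => Set.Ioc (a i) (b i), f x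
            ∂(Measure.pi fun _ : Fin n => volume))
    (σ : Ω → Equiv.Perm (Fin n)) (hσmeas : Measurable σ)
    (hσunif : ∀ π : Equiv.Perm (Fin n),
      P {ω | σ ω = π} = (Nat.factorial n : ENNReal)⁻¹)
    (hindep : IndepFun σ (fun ω i => X i ω) P)
    (y : Fin n → ℝ) (hy : ∀ i, y i ∈ Set.Icc (0 : ℝ) 1) :
    (P {ω | (∀ i, y i < X (σ ω i) ω) ∧
        ∀ i j, i ≠ j → X (σ ω i) ω ≠ X (σ ω j) ω}).toReal
      = (1 / (Nat.factorial n : ℝ)) *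
          ∫ x in Set.univ.pi fun i => Set.Ioc (y i) 1, f x
            ∂(Measure.pi fun _ : Fin n => volume) := by
  classical
  set Leb := Measure.pi fun _ : Fin n => (volume : Measure ℝ) with hLeb
  set Xv : Ω → (Fin n → ℝ) := fun ω i => X i ω with hXv
  have hXvmeas : Measurable Xv := measurable_pi_lambda _ fun i => hXmeas i
  set μ : Measure (Fin n → ℝ) := P.map Xv with hμ
  haveI : IsProbabilityMeasure μ := Measure.isProbabilityMeasure_map hXvmeas.aemeasurable
  -- the density identity, for good boxes
  have hdens' : ∀ a b : Fin n → ℝ, UnorderAux.goodPair a b →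
      (μ (UnorderAux.incBox a b)).toReal = ∫ x in UnorderAux.incBox a b, f x ∂Leb := by
    rintro a b ⟨h1, h2, h3, h4⟩
    have hpre : Xv ⁻¹' UnorderAux.incBox a b = {ω | ∀ i, X i ω ∈ Set.Ioc (a i) (b i)} := by
      ext ω
      simp [UnorderAux.incBox, hXv]
    rw [hμ, Measure.map_apply hXvmeas (UnorderAux.measurableSet_incBox a b), hpre]
    exact hdens a b h1 h2 h3 h4
  -- the sets Sπ in the state space
  set S : Equiv.Perm (Fin n) → Set (Fin n → ℝ) := fun π =>
    {x | ∀ i, y i < x (π i)} ∩ {x | ∀ i j, i ≠ j → x i ≠ x j} with hS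
  have hSmeas : ∀ π, MeasurableSet (S π) := by
    intro π
    apply MeasurableSet.inter
    · have : {x : Fin n → ℝ | ∀ i, y i < x (π i)}
          = ⋂ i, {x : Fin n → ℝ | y i < x (π i)} := by
        ext x; simp
      rw [this]
      exact MeasurableSet.iInter fun i =>
        measurableSet_lt measurable_const (measurable_pi_apply _)
    · have : {x : Fin n → ℝ | ∀ i j, i ≠ j → x i ≠ x j}
          = ⋂ (i) (j) (_ : i ≠ j), {x : Fin n → ℝ | x i = x j}ᶜ := by
        ext x; simp
      rw [this]
      exact MeasurableSet.iInter fun i => MeasurableSet.iInter fun j =>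
        MeasurableSet.iInter fun _ =>
          (measurableSet_eq_fun (measurable_pi_apply i) (measurable_pi_apply j)).compl
  -- decomposition of the event according to the value of σ
  have hEdec : {ω | (∀ i, y i < X (σ ω i) ω) ∧
        ∀ i j, i ≠ j → X (σ ω i) ω ≠ X (σ ω j) ω}
      = ⋃ π : Equiv.Perm (Fin n), σ ⁻¹' {π} ∩ Xv ⁻¹' S π := by
    ext ω
    simp only [Set.mem_setOf_eq, Set.mem_iUnion, Set.mem_inter_iff, Set.mem_preimage,
      Set.mem_singleton_iff, hS, hXv]
    constructor
    · rintro ⟨h1, h2⟩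
      refine ⟨σ ω, rfl, h1, fun i j hij => ?_⟩
      have hne : (σ ω).symm i ≠ (σ ω).symm j := fun h => hij (by
        simpa using congrArg (σ ω) h)
      have h3 := h2 _ _ hne
      simpa using h3
    · rintro ⟨π, hπ, h1, h2⟩
      subst hπ
      exact ⟨h1, fun i j hij => h2 _ _ ((σ ω).injective.ne hij)⟩
  have hmeasπ : ∀ π : Equiv.Perm (Fin n), MeasurableSet (σ ⁻¹' {π} ∩ Xv ⁻¹' S π) :=
    fun π => (hσmeas (MeasurableSpace.measurableSet_top (s := {π}))).inter
      (hXvmeas (hSmeas π))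
  have hdisj : Pairwise (Function.onFun Disjoint
      fun π : Equiv.Perm (Fin n) => σ ⁻¹' {π} ∩ Xv ⁻¹' S π) := by
    intro π₁ π₂ hne
    rw [Function.onFun, Set.disjoint_left]
    rintro ω ⟨h1, _⟩ ⟨h2, _⟩
    simp only [Set.mem_preimage, Set.mem_singleton_iff] at h1 h2
    exact hne (by rw [← h1, ← h2])
  -- independence gives the value of each term
  have hterm : ∀ π : Equiv.Perm (Fin n), P (σ ⁻¹' {π} ∩ Xv ⁻¹' S π)
      = (Nat.factorial n : ENNReal)⁻¹ * μ (S π) := by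
    intro π
    rw [hindep.measure_inter_preimage_eq_mul _ _
      (MeasurableSpace.measurableSet_top (s := {π})) (hSmeas π)]
    congr 1
    · have h1 : σ ⁻¹' {π} = {ω | σ ω = π} := by ext; simp
      rw [h1, hσunif π]
    · rw [hμ, Measure.map_apply hXvmeas (hSmeas π)]
  -- ordered support
  set M : Set (Fin n → ℝ) := {x | ∀ i j : Fin n, i ≤ j → x i ≤ x j}
      ∩ {x | ∀ i, x i ∈ Set.Icc (0 : ℝ) 1} with hM
  have hMmeas : MeasurableSet M := by
    apply MeasurableSet.inter
    · have : {x : Fin n → ℝ | ∀ i j : Fin n, i ≤ j → x i ≤ x j}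
          = ⋂ (i) (j) (_ : i ≤ j), {x : Fin n → ℝ | x i ≤ x j} := by
        ext x; simp
      rw [this]
      exact MeasurableSet.iInter fun i => MeasurableSet.iInter fun j =>
        MeasurableSet.iInter fun _ =>
          measurableSet_le (measurable_pi_apply i) (measurable_pi_apply j)
    · have : {x : Fin n → ℝ | ∀ i, x i ∈ Set.Icc (0 : ℝ) 1}
          = ⋂ i, (fun x : Fin n → ℝ => x i) ⁻¹' Set.Icc (0 : ℝ) 1 := by
        ext x; simp
      rw [this]
      exact MeasurableSet.iInter fun i =>
        measurableSet_Icc.preimage (measurable_pi_apply i)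
  have hMc : μ Mᶜ = 0 := by
    rw [hμ, Measure.map_apply hXvmeas hMmeas.compl]
    have h0 : Xv ⁻¹' Mᶜ = ∅ := by
      apply Set.eq_empty_iff_forall_notMem.2
      intro ω hω
      exact hω ⟨fun i j hij => hmono ω i j hij, fun i => hX01 i ω⟩
    rw [h0, measure_empty]
  have hAM : ∀ A : Set (Fin n → ℝ), μ A = μ (A ∩ M) := by
    intro A
    apply le_antisymm
    · calc μ A = μ ((A ∩ M) ∪ (A ∩ Mᶜ)) := by rw [Set.inter_union_compl]
        _ ≤ μ (A ∩ M) + μ (A ∩ Mᶜ) := measure_union_le _ _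
        _ ≤ μ (A ∩ M) + 0 := add_le_add le_rfl
            (le_of_le_of_eq (measure_mono Set.inter_subset_right) hMc)
        _ = μ (A ∩ M) := add_zero _
    · exact measure_mono Set.inter_subset_left
  have hSM : ∀ π : Equiv.Perm (Fin n),
      S π ∩ M = UnorderAux.upSet (fun j => y (π.symm j)) := by
    intro π
    ext x
    constructor
    · rintro ⟨⟨h1, h2⟩, hmon, hbd⟩
      have hinj : Function.Injective x := by
        intro a b hab
        by_contra hne
        exact h2 a b hne hab
      have hmono' : Monotone x := fun a b hab => hmon a b hab
      have hsm : StrictMono x := hmono'.strictMono_of_injective hinj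
      refine ⟨hsm, fun j => ⟨?_, (hbd j).2⟩⟩
      have h3 := h1 (π.symm j)
      simpa using h3
    · rintro ⟨hsm, hbd⟩
      refine ⟨⟨fun i => ?_, fun i j hij => hsm.injective.ne hij⟩,
        fun i j hij => hsm.monotone hij,
        fun i => ⟨le_of_lt (lt_of_le_of_lt (hy _).1 (hbd i).1), (hbd i).2⟩⟩
      have h4 := (hbd (π i)).1
      simpa using h4
  have hμS : ∀ π : Equiv.Perm (Fin n),
      μ (S π) = μ (UnorderAux.upSet (fun j => y (π.symm j))) := by
    intro π
    rw [hAM (S π), hSM π]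
  -- the key identity for the upper sets
  have hkey : ∀ π : Equiv.Perm (Fin n),
      (μ (UnorderAux.upSet (fun j => y (π.symm j)))).toReal
        = ∫ x in UnorderAux.upSet (fun j => y (π.symm j)), f x ∂Leb :=
    fun π => UnorderAux.measure_upSet_eq hfint hdens' (fun j => (hy _).1)
  -- put everything together
  rw [hEdec, measure_iUnion hdisj hmeasπ, tsum_fintype]
  have hsum : ∀ π : Equiv.Perm (Fin n), P (σ ⁻¹' {π} ∩ Xv ⁻¹' S π)
      = (Nat.factorial n : ENNReal)⁻¹
          * μ (UnorderAux.upSet (fun j => y (π.symm j))) := by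
    intro π
    rw [hterm π, hμS π]
  have hne_top : ∀ π ∈ Finset.univ (α := Equiv.Perm (Fin n)),
      P (σ ⁻¹' {π} ∩ Xv ⁻¹' S π) ≠ ⊤ := fun π _ => measure_ne_top _ _
  rw [ENNReal.toReal_sum hne_top]
  have hterm' : ∀ π : Equiv.Perm (Fin n), (P (σ ⁻¹' {π} ∩ Xv ⁻¹' S π)).toReal
      = (1 / (Nat.factorial n : ℝ))
          * ∫ x in UnorderAux.upSet (fun j => y (π.symm j)), f x ∂Leb := by
    intro π
    rw [hsum π, ENNReal.toReal_mul, ← hkey π]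
    congr 1
    rw [ENNReal.toReal_inv]
    simp
  rw [Finset.sum_congr rfl fun π _ => hterm' π, ← Finset.mul_sum]
  congr 1
  have hreindex : ∑ π : Equiv.Perm (Fin n),
      ∫ x in UnorderAux.upSet (fun j => y (π.symm j)), f x ∂Leb
      = ∑ τ : Equiv.Perm (Fin n),
          ∫ x in UnorderAux.upSet (fun j => y (τ j)), f x ∂Leb := by
    apply Fintype.sum_bijective (fun π : Equiv.Perm (Fin n) => π.symm)
    · constructor
      · intro a b h
        simpa using congrArg Equiv.symm h
      · intro π
        exact ⟨π.symm, π.symm_symm⟩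
    · intro π
      rfl
  rw [hreindex]
  exact UnorderAux.sum_integral_box hfint hfsymm y
end
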